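/- arXiv:2401.01385 — 7 statements merged into one kernel-verified Lean document; each statement's English description precedes it below -/
import Mathlib

section
/- Let σ = x(1-x) and σ' = 1-2x. A polynomial f(x) ∈ ℚ[x] lies in the set ℚ[σ]·σ' (polynomials of the form g(σ)·(1-2x) with g ∈ ℚ[X]) if and only if f(x) + f(1-x) = 0 for all x. -/
/-!
The reflection `x ↦ 1 - x` fixes `σ = x(1 - x)` and negates `σ' = 1 - 2x`. A polynomial `q` fixed by
the reflection satisfies `q(1) = q(0)`, so `σ ∣ q - q(0)` with a quotient that is again fixed and of
degree two less; by induction `q ∈ ℚ[σ]`. A polynomial `f` negated by the reflection vanishes at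
`1/2`, so `f = q σ'` with `q` fixed by the reflection.
-/

open Polynomial

namespace Polynomial

section CommRing

variable {R : Type*} [CommRing R]

theorem X_mul_one_sub_comp_one_sub : (X * (1 - X) : R[X]).comp (1 - X) = X * (1 - X) := by
  simp only [mul_comp, sub_comp, one_comp, X_comp]
  ring

theorem one_sub_two_mul_X_comp_one_sub : (1 - 2 * X : R[X]).comp (1 - X) = -(1 - 2 * X) := by
  simp only [mul_comp, sub_comp, one_comp, X_comp, ofNat_comp]
  ring

theorem X_mul_one_sub_dvd_sub_C_eval_zero {q : R[X]} (hq : q.comp (1 - X) = q) :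
    X * (1 - X) ∣ q - C (q.eval 0) := by
  have hX : X ∣ q - C (q.eval 0) := by
    simpa only [coeff_zero_eq_eval_zero] using X_dvd_sub_C
  have hroot : (q - C (q.eval 0)).IsRoot 1 := by
    have h1 : q.eval 1 = q.eval 0 := by
      conv_lhs => rw [← hq]
      simp
    simp [IsRoot, h1]
  have hX1 : 1 - X ∣ q - C (q.eval 0) := by
    have h := neg_dvd.mpr (dvd_iff_isRoot.mpr hroot)
    rwa [C_1, neg_sub] at h
  exact IsCoprime.mul_dvd ⟨1, 1, by ring⟩ hX hX1

theorem natDegree_X_mul_one_sub [Nontrivial R] : (X * (1 - X) : R[X]).natDegree = 2 := by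
  rw [show (X * (1 - X) : R[X]) = -X ^ 2 + X by ring]
  compute_degree!

theorem X_mul_one_sub_ne_zero [Nontrivial R] : (X * (1 - X) : R[X]) ≠ 0 :=
  ne_zero_of_natDegree_gt (n := 0) (by rw [natDegree_X_mul_one_sub]; norm_num)

end CommRing

section IsDomain

variable {R : Type*} [CommRing R] [IsDomain R]

theorem exists_eq_comp_X_mul_one_sub_of_comp_one_sub_eq {q : R[X]} (hq : q.comp (1 - X) = q) :
    ∃ g : R[X], q = g.comp (X * (1 - X)) := by
  induction hn : q.natDegree using Nat.strong_induction_on generalizing q with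
  | _ n ih =>
    obtain ⟨r, hr⟩ := X_mul_one_sub_dvd_sub_C_eval_zero hq
    rcases eq_or_ne r 0 with rfl | hr0
    · exact ⟨C (q.eval 0), by rw [C_comp, ← sub_eq_zero, hr, mul_zero]⟩
    have hr_fixed : r.comp (1 - X) = r := by
      apply mul_left_cancel₀ (X_mul_one_sub_ne_zero (R := R))
      calc X * (1 - X) * r.comp (1 - X) = (X * (1 - X) * r).comp (1 - X) := by
            rw [mul_comp, X_mul_one_sub_comp_one_sub]
        _ = X * (1 - X) * r := by rw [← hr, sub_comp, C_comp, hq]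
    have hdeg : r.natDegree < n := by
      have := congr_arg natDegree hr
      rw [natDegree_sub_C, natDegree_mul X_mul_one_sub_ne_zero hr0, natDegree_X_mul_one_sub] at this
      omega
    obtain ⟨g, hg⟩ := ih _ hdeg hr_fixed rfl
    refine ⟨X * g + C (q.eval 0), ?_⟩
    rw [add_comp, mul_comp, X_comp, C_comp, ← hg, ← hr, sub_add_cancel]

theorem comp_one_sub_eq_neg_iff_forall_eval [Infinite R] {f : R[X]} :
    f.comp (1 - X) = -f ↔ ∀ x : R, f.eval x + f.eval (1 - x) = 0 := by
  refine ⟨fun hf x => ?_, fun hf => funext fun x => ?_⟩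
  · have := congr_arg (eval x) hf
    simp only [eval_comp, eval_sub, eval_one, eval_X, eval_neg] at this
    rw [this, add_neg_cancel]
  · simp only [eval_comp, eval_sub, eval_one, eval_X, eval_neg]
    exact eq_neg_of_add_eq_zero_right (hf x)

end IsDomain

section Field

variable {K : Type*} [Field K] [NeZero (2 : K)]

theorem one_sub_two_mul_X_dvd_of_comp_one_sub_eq_neg {f : K[X]} (hf : f.comp (1 - X) = -f) :
    1 - 2 * X ∣ f := by
  have hroot : f.IsRoot (1 / 2) := by
    have h := congr_arg (eval (1 / 2)) hf
    simp only [eval_comp, eval_sub, eval_one, eval_X, eval_neg, sub_half] at h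
    have h2 : 2 * f.eval (1 / 2) = 0 := by linear_combination h
    exact (mul_eq_zero.mp h2).resolve_left two_ne_zero
  have hassociated : 1 - 2 * X = C (-2) * (X - C (1 / 2 : K)) := by
    rw [mul_sub, ← C_mul, neg_mul, mul_one_div_cancel two_ne_zero, C_neg, C_neg, C_1, C_ofNat]
    ring
  rw [hassociated, C_mul_dvd (neg_ne_zero.mpr two_ne_zero)]
  exact dvd_iff_isRoot.mpr hroot

theorem exists_eq_comp_mul_one_sub_two_mul_X_iff {f : K[X]} :
    (∃ g : K[X], f = g.comp (X * (1 - X)) * (1 - 2 * X)) ↔ f.comp (1 - X) = -f := by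
  refine ⟨fun ⟨g, hg⟩ => ?_, fun hf => ?_⟩
  · rw [hg, mul_comp, comp_assoc, X_mul_one_sub_comp_one_sub, one_sub_two_mul_X_comp_one_sub,
      mul_neg]
  obtain ⟨q, rfl⟩ := one_sub_two_mul_X_dvd_of_comp_one_sub_eq_neg hf
  have hq : q.comp (1 - X) = q := by
    apply mul_left_cancel₀ (show (1 - 2 * X : K[X]) ≠ 0 from fun h => by
      simpa using congr_arg (eval 0) h)
    rwa [mul_comp, one_sub_two_mul_X_comp_one_sub, neg_mul, neg_inj] at hf
  obtain ⟨g, rfl⟩ := exists_eq_comp_X_mul_one_sub_of_comp_one_sub_eq hq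
  exact ⟨g, mul_comm _ _⟩

end Field

end Polynomial

theorem polynomial_in_Q_sigma_sigma'_iff (f : Polynomial ℚ) :
    (∃ g : Polynomial ℚ,
        f = g.comp (Polynomial.X * (1 - Polynomial.X)) * (1 - 2 * Polynomial.X)) ↔
      ∀ x : ℚ, f.eval x + f.eval (1 - x) = 0 := by
  rw [exists_eq_comp_mul_one_sub_two_mul_X_iff, comp_one_sub_eq_neg_iff_forall_eval]
end

section
/- For every nonnegative integer k there exist rational numbers B_{k,0}, ..., B_{k,k} with B_{k,0} = 1 and B_{k,k} = (2k)! such that for all x where sinh(x) ≠ 0, the 2k-th derivative of 1/sinh(x) equals the sum over l from 0 to k of B_{k,l} / sinh^{2l+1}(x). Moreover the coefficients satisfy the recurrence B_{k,l} = (2l-1)(2l) B_{k-1,l-1} + (2l+1)^2 B_{k-1,l} for 1 ≤ l ≤ k. -/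
open Real Finset

private def Bc : ℕ → ℕ → ℚ
  | _, 0 => 1
  | 0, _+1 => 0
  | k+1, l+1 => (2*((l:ℚ)+1)-1)*(2*((l:ℚ)+1))*Bc k l + (2*((l:ℚ)+1)+1)^2 * Bc k (l+1)

private lemma Bc_zero_right : ∀ k, Bc k 0 = 1 := by
  intro k
  match k with
  | 0 => rfl
  | k+1 => rfl

private lemma Bc_zero : ∀ k l, k < l → Bc k l = 0 := by
  intro k
  induction k with
  | zero =>
    intro l hl
    match l, hl with
    | l+1, _ => rfl
  | succ k ih =>
    intro l hl
    match l, hl with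
    | l+1, hl =>
      have h1 : Bc k l = 0 := ih _ (by omega)
      have h2 : Bc k (l+1) = 0 := ih _ (by omega)
      show (2*((l:ℚ)+1)-1)*(2*((l:ℚ)+1))*Bc k l + (2*((l:ℚ)+1)+1)^2 * Bc k (l+1) = 0
      rw [h1, h2]; ring

private lemma Bc_diag : ∀ k, Bc k k = (2*k).factorial := by
  intro k
  induction k with
  | zero => rfl
  | succ k ih =>
    have h0 : Bc k (k+1) = 0 := Bc_zero k (k+1) (by omega)
    show (2*((k:ℚ)+1)-1)*(2*((k:ℚ)+1))*Bc k k + (2*((k:ℚ)+1)+1)^2 * Bc k (k+1)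
        = ((2*(k+1)).factorial : ℚ)
    rw [h0, ih]
    have hf : (2*(k+1)).factorial = (2*k+2) * ((2*k+1) * (2*k).factorial) := by
      rw [show 2*(k+1) = (2*k+1)+1 by ring, Nat.factorial_succ,
        show 2*k+1 = (2*k)+1 from rfl, Nat.factorial_succ]
    rw [hf]
    push_cast
    ring

private lemma hasDerivAt_one_div_sinh_pow (m : ℕ) {x : ℝ} (hx : Real.sinh x ≠ 0) :
    HasDerivAt (fun t => 1 / Real.sinh t ^ (m+1))
      (-((m:ℝ)+1) * Real.cosh x / Real.sinh x ^ (m+2)) x := by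
  have h1 : HasDerivAt (fun t => Real.sinh t ^ (m+1))
      (((m:ℝ)+1) * Real.sinh x ^ m * Real.cosh x) x := by
    have := (Real.hasDerivAt_sinh x).fun_pow (m+1)
    simpa using this
  have h2 := h1.fun_inv (pow_ne_zero _ hx)
  have hfun : (fun t => (Real.sinh t ^ (m+1))⁻¹) = fun t => 1 / Real.sinh t ^ (m+1) := by
    funext t; rw [one_div]
  rw [hfun] at h2
  refine h2.congr_deriv ?_
  field_simp
  ring

private lemma hasDerivAt_cosh_div_sinh_pow (m : ℕ) {x : ℝ} (hx : Real.sinh x ≠ 0) :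
    HasDerivAt (fun t => Real.cosh t / Real.sinh t ^ (m+1))
      (-(m:ℝ) / Real.sinh x ^ m - ((m:ℝ)+1) / Real.sinh x ^ (m+2)) x := by
  have hc : HasDerivAt Real.cosh (Real.sinh x) x := Real.hasDerivAt_cosh x
  have h1 : HasDerivAt (fun t => Real.sinh t ^ (m+1))
      (((m:ℝ)+1) * Real.sinh x ^ m * Real.cosh x) x := by
    have := (Real.hasDerivAt_sinh x).fun_pow (m+1)
    simpa using this
  have h2 := hc.fun_div h1 (pow_ne_zero _ hx)
  refine h2.congr_deriv ?_
  have hcs : Real.cosh x ^ 2 = 1 + Real.sinh x ^ 2 := by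
    rw [Real.cosh_sq]; ring
  have hcc : Real.cosh x * (((m:ℝ)+1) * Real.sinh x ^ m * Real.cosh x)
      = ((m:ℝ)+1) * Real.sinh x ^ m * (1 + Real.sinh x ^ 2) := by
    rw [← hcs]; ring
  rw [hcc]
  field_simp
  ring

private noncomputable def Sf (k : ℕ) : ℝ → ℝ :=
  fun x => ∑ l ∈ Finset.range (k+1), (Bc k l : ℝ) * (1 / Real.sinh x ^ (2*l+1))

private noncomputable def Tf (k : ℕ) : ℝ → ℝ :=
  fun x => ∑ l ∈ Finset.range (k+1),
    (Bc k l : ℝ) * (-(2*(l:ℝ)+1) * Real.cosh x / Real.sinh x ^ (2*l+2))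

private noncomputable def Uf (k : ℕ) : ℝ → ℝ :=
  fun x => ∑ l ∈ Finset.range (k+1),
    (Bc k l : ℝ) * ((2*(l:ℝ)+1)^2 * (1 / Real.sinh x ^ (2*l+1))
      + (2*(l:ℝ)+1)*(2*(l:ℝ)+2) * (1 / Real.sinh x ^ (2*l+3)))

private lemma hasDerivAt_Sf (k : ℕ) {x : ℝ} (hx : Real.sinh x ≠ 0) :
    HasDerivAt (Sf k) (Tf k x) x := by
  unfold Sf Tf
  apply HasDerivAt.fun_sum
  intro l _
  have h := (hasDerivAt_one_div_sinh_pow (2*l) hx).const_mul ((Bc k l : ℝ))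
  refine h.congr_deriv ?_
  push_cast
  ring

private lemma hasDerivAt_Tf (k : ℕ) {x : ℝ} (hx : Real.sinh x ≠ 0) :
    HasDerivAt (Tf k) (Uf k x) x := by
  unfold Tf Uf
  apply HasDerivAt.fun_sum
  intro l _
  have hfun : (fun t => (Bc k l : ℝ) * (-(2*(l:ℝ)+1) * Real.cosh t / Real.sinh t ^ (2*l+2)))
      = fun t => ((Bc k l : ℝ) * -(2*(l:ℝ)+1)) * (Real.cosh t / Real.sinh t ^ (2*l+2)) := by
    funext t; ring
  rw [hfun]
  have h := (hasDerivAt_cosh_div_sinh_pow (2*l+1) hx).const_mul ((Bc k l : ℝ) * -(2*(l:ℝ)+1))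
  have hexp : 2*l+1+1 = 2*l+2 := rfl
  rw [hexp] at h
  refine h.congr_deriv ?_
  have hexp2 : 2*l+1+2 = 2*l+3 := rfl
  rw [hexp2]
  push_cast
  have hs1 : Real.sinh x ^ (2*l+1) ≠ 0 := pow_ne_zero _ hx
  have hs3 : Real.sinh x ^ (2*l+3) ≠ 0 := pow_ne_zero _ hx
  field_simp
  ring

private lemma Uf_eq_Sf_succ (k : ℕ) {x : ℝ} (hx : Real.sinh x ≠ 0) :
    Uf k x = Sf (k+1) x := by
  have step1 : ∀ j : ℕ, (Bc (k+1) (j+1) : ℝ)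
      = (2*(j:ℝ)+1)*(2*(j:ℝ)+2)*(Bc k j : ℝ) + (2*(j:ℝ)+3)^2 * (Bc k (j+1) : ℝ) := by
    intro j
    show ((((2*((j:ℚ)+1)-1)*(2*((j:ℚ)+1))*Bc k j + (2*((j:ℚ)+1)+1)^2 * Bc k (j+1)) : ℚ) : ℝ) = _
    push_cast
    ring
  have e1 : Sf (k+1) x = (∑ j ∈ Finset.range (k+1),
        ((2*(j:ℝ)+1)*(2*(j:ℝ)+2)*(Bc k j : ℝ) * (1 / Real.sinh x ^ (2*j+3))
          + (2*(j:ℝ)+3)^2 * (Bc k (j+1) : ℝ) * (1 / Real.sinh x ^ (2*j+3))))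
      + 1 / Real.sinh x := by
    unfold Sf
    rw [Finset.sum_range_succ']
    congr 1
    · apply Finset.sum_congr rfl
      intro j _
      rw [step1 j, show 2*(j+1)+1 = 2*j+3 by ring]
      ring
    · rw [Bc_zero_right]
      norm_num
  have e2 : Sf (k+1) x
      = (∑ j ∈ Finset.range (k+1),
          (2*(j:ℝ)+1)*(2*(j:ℝ)+2)*(Bc k j : ℝ) * (1 / Real.sinh x ^ (2*j+3)))
        + ((∑ j ∈ Finset.range (k+1),
            (2*(j:ℝ)+3)^2 * (Bc k (j+1) : ℝ) * (1 / Real.sinh x ^ (2*j+3)))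
          + 1 / Real.sinh x) := by
    rw [e1, Finset.sum_add_distrib]
    ring
  have e3 : (∑ j ∈ Finset.range (k+1),
        (2*(j:ℝ)+3)^2 * (Bc k (j+1) : ℝ) * (1 / Real.sinh x ^ (2*j+3)))
        + 1 / Real.sinh x
      = ∑ l ∈ Finset.range (k+1), (Bc k l : ℝ) * (2*(l:ℝ)+1)^2 * (1 / Real.sinh x ^ (2*l+1)) := by
    conv_rhs => rw [Finset.sum_range_succ']
    rw [Finset.sum_range_succ]
    have hz : (Bc k (k+1) : ℝ) = 0 := by rw [Bc_zero k (k+1) (by omega)]; norm_num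
    rw [hz]
    congr 1
    · rw [mul_zero, zero_mul, add_zero]
      apply Finset.sum_congr rfl
      intro j _
      rw [show 2*(j+1)+1 = 2*j+3 by ring]
      push_cast
      ring
    · rw [Bc_zero_right]
      norm_num
  have e4 : Uf k x
      = (∑ j ∈ Finset.range (k+1),
          (2*(j:ℝ)+1)*(2*(j:ℝ)+2)*(Bc k j : ℝ) * (1 / Real.sinh x ^ (2*j+3)))
        + ∑ l ∈ Finset.range (k+1), (Bc k l : ℝ) * (2*(l:ℝ)+1)^2 * (1 / Real.sinh x ^ (2*l+1)) := by
    unfold Uf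
    rw [← Finset.sum_add_distrib]
    apply Finset.sum_congr rfl
    intro l _
    ring
  rw [e4, e2, ← e3]

private lemma main_formula : ∀ k : ℕ, ∀ x : ℝ, Real.sinh x ≠ 0 →
    iteratedDeriv (2*k) (fun t => 1 / Real.sinh t) x = Sf k x := by
  intro k
  induction k with
  | zero =>
    intro x hx
    simp [Sf, Bc]
  | succ k ih =>
    intro x hx
    have hopen : IsOpen {y : ℝ | Real.sinh y ≠ 0} := isOpen_ne.preimage Real.continuous_sinh
    have hU : {y : ℝ | Real.sinh y ≠ 0} ∈ nhds x := hopen.mem_nhds hx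
    have h1 : iteratedDeriv (2*k) (fun t => 1 / Real.sinh t) =ᶠ[nhds x] Sf k :=
      Filter.eventuallyEq_of_mem hU (fun y hy => ih y hy)
    have h3 : deriv (Sf k) =ᶠ[nhds x] Tf k :=
      Filter.eventuallyEq_of_mem hU (fun y hy => (hasDerivAt_Sf k hy).deriv)
    have h4 : deriv (iteratedDeriv (2*k) (fun t => 1 / Real.sinh t)) =ᶠ[nhds x] Tf k :=
      h1.deriv.trans h3
    have h5 : deriv (deriv (iteratedDeriv (2*k) (fun t => 1 / Real.sinh t))) x
        = deriv (Tf k) x := h4.deriv_eq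
    have h6 : deriv (Tf k) x = Uf k x := (hasDerivAt_Tf k hx).deriv
    rw [show 2*(k+1) = (2*k)+1+1 by ring, iteratedDeriv_succ, iteratedDeriv_succ,
      h5, h6, Uf_eq_Sf_succ k hx]

theorem iteratedDeriv_one_div_sinh :
    ∃ B : ℕ → ℕ → ℚ,
      (∀ k, B k 0 = 1) ∧
      (∀ k, B k k = (2 * k).factorial) ∧
      (∀ k l, 1 ≤ l → l ≤ k →
        B k l = (2 * (l : ℚ) - 1) * (2 * (l : ℚ)) * B (k - 1) (l - 1)
              + (2 * (l : ℚ) + 1) ^ 2 * B (k - 1) l) ∧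
      (∀ k : ℕ, ∀ x : ℝ, Real.sinh x ≠ 0 →
        iteratedDeriv (2 * k) (fun t => 1 / Real.sinh t) x
          = ∑ l ∈ Finset.range (k + 1), (B k l : ℝ) / Real.sinh x ^ (2 * l + 1)) := by
  refine ⟨Bc, Bc_zero_right, Bc_diag, ?_, ?_⟩
  · intro k l h1 hk
    match k, l, h1, hk with
    | _, 0, h1, _ => exact absurd h1 (by omega)
    | 0, l+1, _, hk => exact absurd hk (by omega)
    | k+1, l+1, _, _ =>
      show (2*((l:ℚ)+1)-1)*(2*((l:ℚ)+1))*Bc k l + (2*((l:ℚ)+1)+1)^2 * Bc k (l+1) = _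
      push_cast
      ring
  · intro k x hx
    rw [main_formula k x hx]
    unfold Sf
    apply Finset.sum_congr rfl
    intro l _
    rw [mul_one_div]
end

section
/- For every nonnegative integer k and the same rational coefficients B_{k,l} as for the sinh case, the 2k-th derivative of 1/cosh(x) equals the sum over l from 0 to k of (-1)^l B_{k,l} / cosh^{2l+1}(x), for all real x. -/
def myB : ℕ → ℕ → ℚ
  | _, 0 => 1
  | 0, _ + 1 => 0
  | k + 1, l + 1 =>
    if k < l then 0 else
      (2 * (l : ℚ) + 1) * (2 * (l : ℚ) + 2) * myB k l
        + (2 * (l : ℚ) + 3) ^ 2 * myB k (l + 1)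

lemma myB_zero (k : ℕ) : myB k 0 = 1 := by cases k <;> rfl

lemma myB_of_lt : ∀ k l : ℕ, k < l → myB k l = 0 := by
  intro k
  induction k with
  | zero => intro l hl; match l, hl with | l + 1, _ => rfl
  | succ k ih =>
    intro l hl
    match l, hl with
    | l + 1, hl =>
      have hk : k < l := Nat.lt_of_succ_lt_succ hl
      simp [myB, hk, ih _ hk, ih _ (Nat.lt_succ_of_lt hk)]

lemma myB_rec (k l : ℕ) (h : l ≤ k) :
    myB (k + 1) (l + 1) =
      (2 * (l : ℚ) + 1) * (2 * (l : ℚ) + 2) * myB k l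
        + (2 * (l : ℚ) + 3) ^ 2 * myB k (l + 1) := by
  simp [myB, Nat.not_lt.mpr h]

lemma myB_diag (k : ℕ) : myB k k = (2 * k).factorial := by
  induction k with
  | zero => rfl
  | succ k ih =>
    rw [myB_rec k k le_rfl, ih, myB_of_lt k (k + 1) (Nat.lt_succ_self k)]
    have : 2 * (k + 1) = (2 * k + 1) + 1 := by ring
    rw [this, Nat.factorial_succ, Nat.factorial_succ]
    push_cast
    ring

lemma hasDerivAt_inv_cosh_pow (m : ℕ) (x : ℝ) :
    HasDerivAt (fun t => 1 / Real.cosh t ^ (m + 1))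
      (-((m : ℝ) + 1) * (Real.sinh x / Real.cosh x ^ (m + 2))) x := by
  have hc : Real.cosh x ≠ 0 := (Real.cosh_pos x).ne'
  have h : HasDerivAt (fun t => 1 / Real.cosh t ^ (m + 1))
      (-(((m : ℝ) + 1) * Real.cosh x ^ m * Real.sinh x) / (Real.cosh x ^ (m + 1)) ^ 2) x := by
    have := ((Real.hasDerivAt_cosh x).fun_pow (m + 1)).fun_inv (pow_ne_zero _ hc)
    simp only [one_div]
    convert! this using 1
    push_cast [Nat.add_sub_cancel]
    ring
  convert h using 1
  field_simp
  ring

lemma hasDerivAt_sinh_div_cosh_pow (m : ℕ) (x : ℝ) :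
    HasDerivAt (fun t => Real.sinh t / Real.cosh t ^ (m + 2))
      (-((m : ℝ) + 1) / Real.cosh x ^ (m + 1) + ((m : ℝ) + 2) / Real.cosh x ^ (m + 3)) x := by
  have hc : Real.cosh x ≠ 0 := (Real.cosh_pos x).ne'
  have h : HasDerivAt (fun t => Real.sinh t / Real.cosh t ^ (m + 2))
      ((Real.cosh x * Real.cosh x ^ (m + 2) -
        Real.sinh x * (((m : ℝ) + 2) * Real.cosh x ^ (m + 1) * Real.sinh x)) /
        (Real.cosh x ^ (m + 2)) ^ 2) x := by
    have := (Real.hasDerivAt_sinh x).fun_div ((Real.hasDerivAt_cosh x).fun_pow (m + 2))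
      (pow_ne_zero _ hc)
    convert! this using 1
    push_cast [Nat.add_sub_cancel]
    ring
  convert h using 1
  field_simp
  ring_nf
  simp only [Real.sinh_sq]
  ring

lemma sum_identity (k : ℕ) (y : ℝ) (hy : y ≠ 0) :
    ∑ l ∈ Finset.range (k + 1),
        ((-1 : ℝ) ^ l * (myB k l : ℝ) * -(((2 * l : ℕ) : ℝ) + 1)) *
          (-(((2 * l : ℕ) : ℝ) + 1) / y ^ (2 * l + 1) + (((2 * l : ℕ) : ℝ) + 2) / y ^ (2 * l + 3))
      = ∑ l ∈ Finset.range (k + 1 + 1), (-1 : ℝ) ^ l * (myB (k + 1) l : ℝ) / y ^ (2 * l + 1) := by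
  have hB : ∀ l, l ≤ k → ((myB (k + 1) (l + 1) : ℝ)) =
      (2 * (l : ℝ) + 1) * (2 * (l : ℝ) + 2) * (myB k l : ℝ)
        + (2 * (l : ℝ) + 3) ^ 2 * (myB k (l + 1) : ℝ) := by
    intro l hl
    have h2 := congrArg (fun q : ℚ => (q : ℝ)) (myB_rec k l hl)
    push_cast at h2
    exact h2
  have lhs_split :
      ∑ l ∈ Finset.range (k + 1),
        ((-1 : ℝ) ^ l * (myB k l : ℝ) * -(((2 * l : ℕ) : ℝ) + 1)) *
          (-(((2 * l : ℕ) : ℝ) + 1) / y ^ (2 * l + 1) + (((2 * l : ℕ) : ℝ) + 2) / y ^ (2 * l + 3))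
      = (∑ l ∈ Finset.range (k + 1),
            (-1 : ℝ) ^ l * (myB k l : ℝ) * (2 * (l : ℝ) + 1) ^ 2 / y ^ (2 * l + 1))
        + ∑ l ∈ Finset.range (k + 1),
            (-1 : ℝ) ^ (l + 1) * (myB k l : ℝ) * ((2 * (l : ℝ) + 1) * (2 * (l : ℝ) + 2))
              / y ^ (2 * l + 3) := by
    rw [← Finset.sum_add_distrib]
    refine Finset.sum_congr rfl fun l _ => ?_
    push_cast
    ring
  have e1 : ∑ l ∈ Finset.range (k + 1),
        (-1 : ℝ) ^ (l + 1) * (myB (k + 1) (l + 1) : ℝ) / y ^ (2 * (l + 1) + 1)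
      = (∑ l ∈ Finset.range (k + 1),
            (-1 : ℝ) ^ (l + 1) * (myB k l : ℝ) * ((2 * (l : ℝ) + 1) * (2 * (l : ℝ) + 2))
              / y ^ (2 * l + 3))
        + ∑ l ∈ Finset.range (k + 1),
            (-1 : ℝ) ^ (l + 1) * ((2 * (l : ℝ) + 3) ^ 2) * (myB k (l + 1) : ℝ)
              / y ^ (2 * l + 3) := by
    rw [← Finset.sum_add_distrib]
    refine Finset.sum_congr rfl fun l hl => ?_
    rw [hB l (Nat.lt_succ_iff.mp (Finset.mem_range.mp hl))]
    have h3 : 2 * (l + 1) + 1 = 2 * l + 3 := by ring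
    rw [h3]
    ring
  have e2 : ∑ l ∈ Finset.range (k + 1),
        (-1 : ℝ) ^ (l + 1) * ((2 * (l : ℝ) + 3) ^ 2) * (myB k (l + 1) : ℝ) / y ^ (2 * l + 3)
      = ∑ l ∈ Finset.range k,
        (-1 : ℝ) ^ (l + 1) * ((2 * (l : ℝ) + 3) ^ 2) * (myB k (l + 1) : ℝ) / y ^ (2 * l + 3) := by
    rw [Finset.sum_range_succ, myB_of_lt k (k + 1) (Nat.lt_succ_self k)]
    simp
  have e3 : ∑ l ∈ Finset.range (k + 1),
        (-1 : ℝ) ^ l * (myB k l : ℝ) * (2 * (l : ℝ) + 1) ^ 2 / y ^ (2 * l + 1)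
      = (∑ l ∈ Finset.range k,
            (-1 : ℝ) ^ (l + 1) * ((2 * (l : ℝ) + 3) ^ 2) * (myB k (l + 1) : ℝ) / y ^ (2 * l + 3))
        + 1 / y := by
    rw [Finset.sum_range_succ']
    congr 1
    · refine Finset.sum_congr rfl fun l _ => ?_
      have h3 : 2 * (l + 1) + 1 = 2 * l + 3 := by ring
      rw [h3]
      push_cast
      ring
    · simp [myB_zero]
  have e0 : (-1 : ℝ) ^ 0 * (myB (k + 1) 0 : ℝ) / y ^ (2 * 0 + 1) = 1 / y := by
    simp [myB_zero]
  rw [lhs_split, e3]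
  conv_rhs => rw [Finset.sum_range_succ']
  rw [e1, e2, e0]
  ring

lemma main_formula_s3 (k : ℕ) (x : ℝ) :
    iteratedDeriv (2 * k) (fun t => 1 / Real.cosh t) x
      = ∑ l ∈ Finset.range (k + 1),
          (-1 : ℝ) ^ l * (myB k l : ℝ) / Real.cosh x ^ (2 * l + 1) := by
  induction k generalizing x with
  | zero => simp [iteratedDeriv_zero, myB_zero]
  | succ k ih =>
    have h2 : 2 * (k + 1) = (2 * k + 1) + 1 := by ring
    rw [h2, iteratedDeriv_succ, iteratedDeriv_succ]
    have hG : iteratedDeriv (2 * k) (fun t => 1 / Real.cosh t)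
        = fun y => ∑ l ∈ Finset.range (k + 1),
            (-1 : ℝ) ^ l * (myB k l : ℝ) / Real.cosh y ^ (2 * l + 1) := funext ih
    rw [hG]
    have hd1 : deriv (fun y => ∑ l ∈ Finset.range (k + 1),
          (-1 : ℝ) ^ l * (myB k l : ℝ) / Real.cosh y ^ (2 * l + 1))
        = fun y => ∑ l ∈ Finset.range (k + 1),
            ((-1 : ℝ) ^ l * (myB k l : ℝ) * -(((2 * l : ℕ) : ℝ) + 1)) *
              (Real.sinh y / Real.cosh y ^ (2 * l + 2)) := by
      funext y
      refine HasDerivAt.deriv (HasDerivAt.fun_sum fun l _ => ?_)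
      have h := (hasDerivAt_inv_cosh_pow (2 * l) y).const_mul ((-1 : ℝ) ^ l * (myB k l : ℝ))
      simp only [mul_one_div] at h
      convert! h using 1
      ring
    rw [hd1]
    have hd2 : HasDerivAt (fun y => ∑ l ∈ Finset.range (k + 1),
          ((-1 : ℝ) ^ l * (myB k l : ℝ) * -(((2 * l : ℕ) : ℝ) + 1)) *
            (Real.sinh y / Real.cosh y ^ (2 * l + 2)))
        (∑ l ∈ Finset.range (k + 1),
          ((-1 : ℝ) ^ l * (myB k l : ℝ) * -(((2 * l : ℕ) : ℝ) + 1)) *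
            (-(((2 * l : ℕ) : ℝ) + 1) / Real.cosh x ^ (2 * l + 1)
              + (((2 * l : ℕ) : ℝ) + 2) / Real.cosh x ^ (2 * l + 3))) x :=
      HasDerivAt.fun_sum fun l _ =>
        (hasDerivAt_sinh_div_cosh_pow (2 * l) x).const_mul
          ((-1 : ℝ) ^ l * (myB k l : ℝ) * -(((2 * l : ℕ) : ℝ) + 1))
    rw [hd2.deriv]
    exact sum_identity k (Real.cosh x) (Real.cosh_pos x).ne'

theorem iteratedDeriv_one_div_cosh :
    ∃ B : ℕ → ℕ → ℚ,
      (∀ k, B k 0 = 1) ∧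
      (∀ k, B k k = (2 * k).factorial) ∧
      (∀ k l, 1 ≤ l → l ≤ k →
        B k l = (2 * (l : ℚ) - 1) * (2 * (l : ℚ)) * B (k - 1) (l - 1)
              + (2 * (l : ℚ) + 1) ^ 2 * B (k - 1) l) ∧
      (∀ k : ℕ, ∀ x : ℝ,
        iteratedDeriv (2 * k) (fun t => 1 / Real.cosh t) x
          = ∑ l ∈ Finset.range (k + 1),
              (-1 : ℝ) ^ l * (B k l : ℝ) / Real.cosh x ^ (2 * l + 1)) := by
  refine ⟨myB, myB_zero, myB_diag, ?_, main_formula_s3⟩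
  intro k l h1 h2
  obtain ⟨l, rfl⟩ : ∃ l', l = l' + 1 := ⟨l - 1, (Nat.succ_pred_eq_of_pos h1).symm⟩
  obtain ⟨k, rfl⟩ : ∃ k', k = k' + 1 := ⟨k - 1, (Nat.succ_pred_eq_of_pos (Nat.lt_of_lt_of_le h1 h2)).symm⟩
  have hl : l ≤ k := Nat.succ_le_succ_iff.mp h2
  simp only [Nat.add_sub_cancel]
  rw [myB_rec k l hl]
  push_cast
  ring
end

section
/- For every nonnegative integer n, the value at x = 1/2 of the n-th derivative of z(x) = ₂F₁(1/2, 1/2; 1; x) equals ((1/2)_n)^2 √π / Γ(n/2 + 3/4)^2. -/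
/-- Ascending Pochhammer symbol `(a)_n = a(a+1)⋯(a+n-1)`. -/
noncomputable def poch (a : ℝ) (n : ℕ) : ℝ := ∏ i ∈ Finset.range n, (a + i)

/-- Gaussian hypergeometric series `₂F₁(a,b;c;x)`. -/
noncomputable def hypF (a b c x : ℝ) : ℝ :=
  ∑' m : ℕ, poch a m * poch b m / poch c m * x ^ m / m.factorial

open MeasureTheory

lemma poch_zero (a : ℝ) : poch a 0 = 1 := by simp [poch]

lemma poch_succ (a : ℝ) (n : ℕ) : poch a (n+1) = poch a n * (a + n) := by
  simp [poch, Finset.prod_range_succ]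

lemma poch_pos {a : ℝ} (ha : 0 < a) (n : ℕ) : 0 < poch a n := by
  refine Finset.prod_pos fun i _ => by positivity

lemma poch_nonneg {a : ℝ} (ha : 0 ≤ a) (n : ℕ) : 0 ≤ poch a n := by
  refine Finset.prod_nonneg fun i _ => by positivity

lemma poch_one (n : ℕ) : poch 1 n = n.factorial := by
  induction n with
  | zero => simp [poch]
  | succ k ih => rw [poch_succ, ih]; push_cast [Nat.factorial_succ]; ring

lemma poch_add (a : ℝ) (n m : ℕ) : poch a (n + m) = poch a n * poch (a + n) m := by
  induction m with
  | zero => simp [poch_zero]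
  | succ k ih => rw [← Nat.add_assoc, poch_succ, ih, poch_succ]; push_cast; ring

lemma poch_mono {a b : ℝ} (ha : 0 ≤ a) (hab : a ≤ b) (n : ℕ) : poch a n ≤ poch b n := by
  refine Finset.prod_le_prod (fun i _ => by positivity) (fun i _ => by linarith)

/-- key growth bound: if `0 ≤ a ≤ N+1` then `poch a m ≤ m! * (m+1)^N`. -/
lemma poch_le_fact_mul_pow {a : ℝ} {N : ℕ} (ha : 0 ≤ a) (haN : a ≤ N + 1) (m : ℕ) :
    poch a m ≤ m.factorial * ((m : ℝ) + 1) ^ N := by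
  induction m with
  | zero => simp [poch_zero]
  | succ k ih =>
    rw [poch_succ]
    have h1 : (0:ℝ) ≤ (k:ℝ) + 1 := by positivity
    have hfact : (0:ℝ) < (k.factorial : ℝ) := by positivity
    have hb : a + k ≤ (N:ℝ) + 1 + k := by linarith
    have step : ((k:ℝ)+1)^N * ((N:ℝ) + 1 + k) ≤ ((k:ℝ)+1) * ((k:ℝ)+2)^N := by
      have hber : 1 + (N:ℝ) * (1/((k:ℝ)+1)) ≤ (1 + 1/((k:ℝ)+1))^N := by
        have := one_add_mul_le_pow (a := 1/((k:ℝ)+1)) (le_trans (by norm_num : (-2:ℝ) ≤ 0) (by positivity)) N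
        linarith
      have hk1 : (0:ℝ) < (k:ℝ) + 1 := by positivity
      have h2 : ((k:ℝ)+2)^N = ((k:ℝ)+1)^N * (1 + 1/((k:ℝ)+1))^N := by
        rw [← mul_pow]; congr 1; field_simp; ring
      rw [h2]
      have h3 : ((k:ℝ)+1) * (((k:ℝ)+1)^N * (1 + 1/((k:ℝ)+1))^N)
          = ((k:ℝ)+1)^N * (((k:ℝ)+1) * (1 + 1/((k:ℝ)+1))^N) := by ring
      rw [h3]
      refine mul_le_mul_of_nonneg_left ?_ (by positivity)
      calc (N:ℝ) + 1 + k = ((k:ℝ)+1) * (1 + (N:ℝ) * (1/((k:ℝ)+1))) := by field_simp; ring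
        _ ≤ ((k:ℝ)+1) * (1 + 1/((k:ℝ)+1))^N := by
            exact mul_le_mul_of_nonneg_left hber (by positivity)
    calc poch a k * (a + k) ≤ (k.factorial * ((k:ℝ)+1)^N) * ((N:ℝ) + 1 + k) := by
          refine mul_le_mul ih hb (by positivity) (by positivity)
      _ = (k.factorial : ℝ) * (((k:ℝ)+1)^N * ((N:ℝ) + 1 + k)) := by ring
      _ ≤ (k.factorial : ℝ) * (((k:ℝ)+1) * ((k:ℝ)+2)^N) := by
          exact mul_le_mul_of_nonneg_left step (le_of_lt hfact)
      _ = (k+1).factorial * (((k+1:ℕ):ℝ) + 1) ^ N := by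
          push_cast [Nat.factorial_succ]; ring

/-- master summability lemma -/
lemma summable_poly_geo (k : ℕ) {r : ℝ} (hr0 : 0 < r) (hr1 : r < 1) :
    Summable (fun m : ℕ => ((m:ℝ) + 1) ^ k * r ^ m) := by
  have h : Summable (fun m : ℕ => ((m:ℝ)) ^ k * r ^ m) := by
    have := summable_pow_mul_geometric_of_norm_lt_one (R := ℝ) k (r := r)
      (by rwa [Real.norm_eq_abs, abs_of_pos hr0])
    exact this
  have h2 : Summable (fun m : ℕ => (((m+1):ℝ)) ^ k * r ^ (m+1)) := by
    have := (summable_nat_add_iff (f := fun m : ℕ => ((m:ℝ)) ^ k * r ^ m) 1).mpr h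
    simpa using this
  have h3 := h2.mul_left (r⁻¹)
  refine h3.congr fun m => ?_
  field_simp [pow_succ]
  ring

section series
variable {c : ℕ → ℝ} {C : ℝ} {k : ℕ}

lemma C_nonneg (hc : ∀ m, |c m| ≤ C * ((m:ℝ)+1)^k) : 0 ≤ C := by
  have := hc 0
  simp at this
  exact le_trans (abs_nonneg _) this

lemma summable_coeff (hc : ∀ m, |c m| ≤ C * ((m:ℝ)+1)^k) {x : ℝ} (hx : |x| < 1) :
    Summable (fun m => c m * x ^ m) := by
  have hC := C_nonneg hc
  set r : ℝ := (|x| + 1)/2 with hr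
  have hr0 : 0 < r := by have := abs_nonneg x; rw [hr]; linarith
  have hxr : |x| ≤ r := by rw [hr]; linarith
  have hr1 : r < 1 := by rw [hr]; linarith
  refine Summable.of_norm_bounded (((summable_poly_geo k hr0 hr1)).mul_left C) fun m => ?_
  rw [norm_mul, norm_pow, Real.norm_eq_abs, Real.norm_eq_abs]
  calc |c m| * |x| ^ m ≤ (C * ((m:ℝ)+1)^k) * r ^ m := by
        refine mul_le_mul (hc m) (pow_le_pow_left₀ (abs_nonneg x) hxr m) (by positivity) ?_
        have := hc m; positivity
    _ = C * (((m:ℝ)+1)^k * r ^ m) := by ring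

lemma hasDerivAt_powser (hc : ∀ m, |c m| ≤ C * ((m:ℝ)+1)^k) {x : ℝ} (hx : |x| < 1) :
    HasDerivAt (fun y => ∑' m, c m * y ^ m) (∑' m, (c (m+1) * ((m:ℝ)+1)) * x ^ m) x := by
  have hC := C_nonneg hc
  set r : ℝ := (|x| + 1)/2 with hr
  have hr0 : 0 < r := by have := abs_nonneg x; rw [hr]; linarith
  have hr1 : r < 1 := by rw [hr]; linarith
  have hxr : |x| < r := by rw [hr]; linarith
  set u : ℕ → ℝ := fun m => (C * ((m:ℝ)+1)^(k+1) / r) * r ^ m with hu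
  have hu_sum : Summable u := by
    refine ((summable_poly_geo (k+1) hr0 hr1).mul_left (C / r)).congr fun m => by
      rw [hu]; ring
  have hbound : ∀ m : ℕ, ∀ y ∈ Set.Ioo (-r) r, ‖c m * ((m:ℝ) * y ^ (m-1))‖ ≤ u m := by
    intro m y hy
    have hyr : |y| ≤ r := by
      rw [abs_le]; exact ⟨le_of_lt hy.1, le_of_lt hy.2⟩
    rw [Real.norm_eq_abs, abs_mul, abs_mul, abs_pow]
    match m with
    | 0 =>
      simp only [Nat.cast_zero, abs_zero, zero_mul, mul_zero, hu]
      positivity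
    | Nat.succ j =>
      simp only [Nat.succ_sub_one, Nat.succ_eq_add_one, hu]
      push_cast
      have h1 : |c (j+1)| ≤ C * ((j:ℝ)+1+1)^k := by
        have := hc (j+1); push_cast at this; exact this
      have h2 : |(j:ℝ)+1| * |y|^j ≤ ((j:ℝ)+1+1) * r^j :=
        mul_le_mul (by rw [abs_of_nonneg (by positivity)]; linarith)
          (pow_le_pow_left₀ (abs_nonneg y) hyr j) (by positivity) (by positivity)
      have h3 : |c (j+1)| * (|(j:ℝ)+1| * |y|^j) ≤ (C * ((j:ℝ)+1+1)^k) * (((j:ℝ)+1+1) * r^j) :=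
        mul_le_mul h1 h2 (by positivity) (le_trans (abs_nonneg _) h1)
      refine le_trans h3 (le_of_eq ?_)
      rw [pow_succ ((j:ℝ)+1+1) k, pow_succ r j]
      field_simp
  have hderiv := hasDerivAt_tsum_of_isPreconnected hu_sum isOpen_Ioo
    (convex_Ioo (-r) r).isPreconnected
    (g := fun m y => c m * y ^ m) (g' := fun m y => c m * ((m:ℝ) * y ^ (m-1)))
    (fun m y _ => (hasDerivAt_pow m y).const_mul (c m))
    hbound
    (by rw [Set.mem_Ioo, ← abs_lt]; exact hxr)
    (summable_coeff hc hx)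
    (by rw [Set.mem_Ioo, ← abs_lt]; exact hxr)
  have hsumd : Summable (fun m => c m * ((m:ℝ) * x ^ (m-1))) := by
    refine Summable.of_norm_bounded hu_sum fun m =>
      hbound m x (by rw [Set.mem_Ioo, ← abs_lt]; exact hxr)
  refine hderiv.congr_deriv (Eq.symm ?_)
  rw [Summable.tsum_eq_zero_add hsumd]
  simp only [Nat.cast_zero, zero_mul, mul_zero, zero_add, Nat.add_sub_cancel]
  refine tsum_congr fun m => ?_
  push_cast; ring
end series

lemma poch_le_pow {a : ℝ} (ha : 0 ≤ a) (n : ℕ) : poch a n ≤ (a + n) ^ n := by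
  unfold poch
  calc ∏ i ∈ Finset.range n, (a + i) ≤ ∏ _i ∈ Finset.range n, (a + n) := by
        refine Finset.prod_le_prod (fun i _ => by positivity) fun i hi => by
          have := Finset.mem_range.mp hi
          have : (i:ℝ) ≤ n := by exact_mod_cast this.le
          linarith
    _ = (a + n) ^ n := by rw [Finset.prod_const, Finset.card_range]

noncomputable def Aco (n m : ℕ) : ℝ :=
  poch (1/2) (m+n) ^ 2 / ((m+n).factorial * m.factorial)

lemma Aco_nonneg (n m : ℕ) : 0 ≤ Aco n m := by
  unfold Aco; positivity

lemma fact_add_eq (m n : ℕ) : (((m+n).factorial : ℕ) : ℝ) = m.factorial * poch ((m:ℝ)+1) n := by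
  rw [← poch_one, ← poch_one]
  have := poch_add 1 m n
  push_cast at this ⊢
  rw [this, add_comm (1:ℝ)]

lemma Aco_bound (n m : ℕ) : |Aco n m| ≤ ((n:ℝ)+1)^n * ((m:ℝ)+1)^n := by
  have h1 : poch (1/2) (m+n) ≤ (m+n).factorial := by
    have := poch_le_fact_mul_pow (a := 1/2) (N := 0) (by norm_num) (by norm_num) (m+n)
    simpa using this
  have h0 : 0 ≤ poch (1/2) (m+n) := poch_nonneg (by norm_num) _
  have hfpos : (0:ℝ) < (m+n).factorial := by positivity
  have hfpos2 : (0:ℝ) < m.factorial := by positivity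
  have hm : (0:ℝ) ≤ m := Nat.cast_nonneg m
  have hn : (0:ℝ) ≤ n := Nat.cast_nonneg n
  rw [abs_of_nonneg (Aco_nonneg n m)]
  have key : poch (1/2) (m+n) ^ 2 ≤ ((m+n).factorial : ℝ) * (m+n).factorial := by
    rw [pow_two]; exact mul_le_mul h1 h1 h0 hfpos.le
  calc Aco n m ≤ (((m+n).factorial : ℝ) * (m+n).factorial) / ((m+n).factorial * m.factorial) := by
        unfold Aco
        exact (div_le_div_iff_of_pos_right (by positivity)).mpr key
    _ = ((m+n).factorial : ℝ) / m.factorial := mul_div_mul_left _ _ (ne_of_gt hfpos)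
    _ = poch ((m:ℝ)+1) n := by
        rw [fact_add_eq m n, mul_comm, mul_div_assoc, div_self (ne_of_gt hfpos2), mul_one]
    _ ≤ ((m:ℝ)+1+n)^n := poch_le_pow (by positivity) n
    _ ≤ (((n:ℝ)+1)*((m:ℝ)+1))^n := by
        refine pow_le_pow_left₀ (by positivity) (by nlinarith) n
    _ = ((n:ℝ)+1)^n * ((m:ℝ)+1)^n := mul_pow _ _ _

lemma Aco_succ_mul (n m : ℕ) : Aco n (m+1) * ((m:ℝ)+1) = Aco (n+1) m := by
  unfold Aco
  have h1 : m + 1 + n = m + (n+1) := by omega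
  rw [h1]
  rw [Nat.factorial_succ]
  push_cast
  have hf : (0:ℝ) < m.factorial := by positivity
  field_simp

noncomputable def Fn (n : ℕ) (x : ℝ) : ℝ := ∑' m, Aco n m * x ^ m

lemma Fn_hasDerivAt (n : ℕ) {x : ℝ} (hx : |x| < 1) :
    HasDerivAt (Fn n) (Fn (n+1) x) x := by
  have h := hasDerivAt_powser (c := Aco n) (Aco_bound n) hx
  have : (∑' m, (Aco n (m+1) * ((m:ℝ)+1)) * x ^ m) = Fn (n+1) x := by
    exact tsum_congr fun m => by rw [Aco_succ_mul]
  rw [this] at h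
  exact h

lemma iteratedDeriv_Fn (n : ℕ) {x : ℝ} (hx : |x| < 1) :
    iteratedDeriv n (Fn 0) x = Fn n x := by
  induction n generalizing x with
  | zero => simp
  | succ k ih =>
    rw [iteratedDeriv_succ]
    have hmem : x ∈ Set.Ioo (-1:ℝ) 1 := by rw [Set.mem_Ioo, ← abs_lt]; exact hx
    have hev : iteratedDeriv k (Fn 0) =ᶠ[nhds x] Fn k := by
      refine Filter.eventuallyEq_of_mem (isOpen_Ioo.mem_nhds hmem) fun y hy => ?_
      exact ih (abs_lt.mpr ⟨hy.1, hy.2⟩)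
    rw [hev.deriv_eq]
    exact (Fn_hasDerivAt k hx).deriv

lemma hypF_eq_Fn : (fun t : ℝ => hypF (1/2) (1/2) 1 t) = Fn 0 := by
  funext t
  unfold hypF Fn
  refine tsum_congr fun m => ?_
  unfold Aco
  rw [poch_one]
  ring

section binom
variable {a : ℝ} {N : ℕ}

/-- coefficient of the binomial series -/
noncomputable def bc (a : ℝ) (m : ℕ) : ℝ := poch a m / m.factorial

lemma bc_bound (ha : 0 ≤ a) (haN : a ≤ N + 1) (m : ℕ) :
    |bc a m| ≤ 1 * ((m:ℝ)+1)^N := by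
  have h0 : 0 ≤ bc a m := div_nonneg (poch_nonneg ha m) (by positivity)
  rw [abs_of_nonneg h0, one_mul]
  unfold bc
  rw [div_le_iff₀ (by positivity)]
  rw [mul_comm]
  exact poch_le_fact_mul_pow ha haN m

lemma bc_deriv_bound (ha : 0 ≤ a) (haN : a ≤ N + 1) (m : ℕ) :
    |bc a (m+1) * ((m:ℝ)+1)| ≤ (2:ℝ)^(N+1) * ((m:ℝ)+1)^(N+1) := by
  have h1 : |bc a (m+1)| ≤ 1 * (((m+1:ℕ):ℝ)+1)^N := bc_bound ha haN (m+1)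
  push_cast at h1
  rw [abs_mul, abs_of_nonneg (by positivity : (0:ℝ) ≤ (m:ℝ)+1)]
  have h2 : ((m:ℝ)+1+1) ≤ 2*((m:ℝ)+1) := by have : (0:ℝ) ≤ m := Nat.cast_nonneg m; linarith
  calc |bc a (m+1)| * ((m:ℝ)+1) ≤ (1 * ((m:ℝ)+1+1)^N) * ((m:ℝ)+1+1) := by
        refine mul_le_mul h1 (by linarith) (by positivity) (by positivity)
    _ = ((m:ℝ)+1+1)^(N+1) := by rw [pow_succ]; ring
    _ ≤ (2*((m:ℝ)+1))^(N+1) := pow_le_pow_left₀ (by positivity) h2 _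
    _ = (2:ℝ)^(N+1) * ((m:ℝ)+1)^(N+1) := mul_pow _ _ _

lemma bc_yderiv_bound (ha : 0 ≤ a) (haN : a ≤ N + 1) (m : ℕ) :
    |(m:ℝ) * bc a m| ≤ 1 * ((m:ℝ)+1)^(N+1) := by
  rw [abs_mul, abs_of_nonneg (Nat.cast_nonneg m : (0:ℝ) ≤ m)]
  have h1 := bc_bound ha haN m
  calc (m:ℝ) * |bc a m| ≤ ((m:ℝ)+1) * (1 * ((m:ℝ)+1)^N) := by
        refine mul_le_mul (by linarith [Nat.cast_nonneg (α := ℝ) m]) h1 (abs_nonneg _)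
          (by positivity)
    _ = 1 * ((m:ℝ)+1)^(N+1) := by rw [pow_succ]; ring

/-- the ODE `(1-y) G' = a G` -/
lemma binom_ode (ha : 0 ≤ a) (haN : a ≤ N + 1) {y : ℝ} (hy : |y| < 1) :
    (1 - y) * (∑' m, (bc a (m+1) * ((m:ℝ)+1)) * y ^ m)
      = a * ∑' m, bc a m * y ^ m := by
  have hsum1 : Summable (fun m => (bc a (m+1) * ((m:ℝ)+1)) * y ^ m) :=
    summable_coeff (bc_deriv_bound ha haN) hy
  have hsum2 : Summable (fun m : ℕ => ((m:ℝ) * bc a m) * y ^ m) :=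
    summable_coeff (bc_yderiv_bound ha haN) hy
  have hyG : y * (∑' m, (bc a (m+1) * ((m:ℝ)+1)) * y ^ m)
      = ∑' m : ℕ, ((m:ℝ) * bc a m) * y ^ m := by
    rw [← tsum_mul_left, Summable.tsum_eq_zero_add hsum2]
    simp only [Nat.cast_zero, zero_mul, zero_add]
    refine tsum_congr fun m => ?_
    push_cast
    ring
  have hexp : (1 - y) * (∑' m, (bc a (m+1) * ((m:ℝ)+1)) * y ^ m)
      = (∑' m, (bc a (m+1) * ((m:ℝ)+1)) * y ^ m) - y * (∑' m, (bc a (m+1) * ((m:ℝ)+1)) * y ^ m) := by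
    ring
  rw [hexp, hyG, ← Summable.tsum_sub hsum1 hsum2, ← tsum_mul_left]
  refine tsum_congr fun m => ?_
  have hkey : bc a (m+1) * ((m:ℝ)+1) - (m:ℝ) * bc a m = a * bc a m := by
    unfold bc
    rw [poch_succ, Nat.factorial_succ]
    push_cast
    have hf : ((m.factorial : ℕ) : ℝ) ≠ 0 := by positivity
    field_simp
    ring
  rw [← sub_mul, hkey]
  ring

lemma binom_tsum (ha : 0 ≤ a) (haN : a ≤ N + 1) {y : ℝ} (hy : |y| < 1) :
    ∑' m, bc a m * y ^ m = (1 - y) ^ (-a) := by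
  set G : ℝ → ℝ := fun y => ∑' m, bc a m * y ^ m with hG
  set H : ℝ → ℝ := fun y => G y * (1 - y) ^ a with hH
  have h1y : ∀ {z : ℝ}, |z| < 1 → (0:ℝ) < 1 - z := by
    intro z hz; rw [abs_lt] at hz; linarith [hz.2]
  have hHderiv : ∀ z ∈ Set.Ioo (-1:ℝ) 1, HasDerivAt H 0 z := by
    intro z hz
    have hz1 : |z| < 1 := abs_lt.mpr ⟨hz.1, hz.2⟩
    have h1z : (0:ℝ) < 1 - z := h1y hz1
    have hGd : HasDerivAt G (∑' m, (bc a (m+1) * ((m:ℝ)+1)) * z ^ m) z :=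
      hasDerivAt_powser (bc_bound ha haN) hz1
    have hrd : HasDerivAt (fun w : ℝ => (1 - w) ^ a) (a * (1-z)^(a-1) * (-1)) z := by
      have hinner : HasDerivAt (fun w : ℝ => 1 - w) (-1) z := by
        simpa using (hasDerivAt_id z).const_sub 1
      exact (Real.hasDerivAt_rpow_const (Or.inl (ne_of_gt h1z))).comp z hinner
    have := hGd.mul hrd
    refine this.congr_deriv (Eq.symm ?_)
    have hode := binom_ode ha haN hz1
    have hrw : (1-z)^(a-1) = (1-z)^a / (1-z) := by
      rw [Real.rpow_sub_one (ne_of_gt h1z)]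
    rw [hrw]
    set D := ∑' m, (bc a (m+1) * ((m:ℝ)+1)) * z ^ m
    field_simp
    nlinarith [hode, Real.rpow_pos_of_pos h1z a]
  have hconst : ∀ z ∈ Set.Ioo (-1:ℝ) 1, H z = H 0 := by
    intro z hz
    refine (convex_Ioo (-1:ℝ) 1).is_const_of_fderivWithin_eq_zero
      (fun w hw => ((hHderiv w hw).differentiableAt).differentiableWithinAt)
      (fun w hw => ?_) hz (by norm_num)
    rw [fderivWithin_of_isOpen isOpen_Ioo hw]
    have := (hHderiv w hw).hasFDerivAt.fderiv
    rw [this]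
    ext
    simp
  have hG0 : G 0 = 1 := by
    rw [hG]
    simp only
    rw [tsum_eq_single 0 (fun m hm => by
      rw [zero_pow hm, mul_zero])]
    simp [bc, poch_zero]
  have hy1 : (0:ℝ) < 1 - y := h1y hy
  have hHy : H y = 1 := by
    have := hconst y (by rw [Set.mem_Ioo, ← abs_lt]; exact hy)
    rw [this, hH]
    simp only
    rw [hG0, sub_zero, Real.one_rpow, one_mul]
  have hne : (1 - y) ^ a ≠ 0 := ne_of_gt (Real.rpow_pos_of_pos hy1 a)
  rw [Real.rpow_neg hy1.le]
  rw [hH] at hHy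
  simp only at hHy
  field_simp at hHy ⊢
  linarith [hHy]
end binom

lemma Gamma_poch {x : ℝ} (hx : 0 < x) (m : ℕ) :
    Real.Gamma (x + m) = Real.Gamma x * poch x m := by
  induction m with
  | zero => simp [poch_zero]
  | succ k ih =>
    have hxk : x + k ≠ 0 := by positivity
    have : x + ((k:ℝ)+1) = (x + k) + 1 := by ring
    push_cast
    rw [this, Real.Gamma_add_one hxk, ih, poch_succ]
    ring

lemma complex_eq_real_beta {p q : ℝ} (x : ℝ) (hx : x ∈ Set.Icc (0:ℝ) 1) :
    (x:ℂ)^((p:ℂ)-1) * ((1:ℂ)-(x:ℂ))^((q:ℂ)-1)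
      = ((x ^ (p-1) * (1-x) ^ (q-1) : ℝ) : ℂ) := by
  have hx0 : (0:ℝ) ≤ x := hx.1
  have hx1 : (0:ℝ) ≤ 1 - x := by linarith [hx.2]
  rw [Complex.ofReal_mul, Complex.ofReal_cpow hx0, Complex.ofReal_cpow hx1]
  push_cast
  ring

lemma betaIntegrable {p q : ℝ} (hp : 0 < p) (hq : 0 < q) :
    IntegrableOn (fun t : ℝ => t ^ (p-1) * (1-t) ^ (q-1)) (Set.Ioo 0 1) := by
  have h := Complex.betaIntegral_convergent (u := (p:ℂ)) (v := (q:ℂ))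
    (by simpa using hp) (by simpa using hq)
  rw [intervalIntegrable_iff, Set.uIoc_of_le (by norm_num : (0:ℝ) ≤ 1)] at h
  have hre : IntegrableOn
      (fun x : ℝ => ((x:ℂ)^((p:ℂ)-1) * ((1:ℂ)-(x:ℂ))^((q:ℂ)-1)).re) (Set.Ioc 0 1) := h.re
  refine (hre.congr_fun ?_ measurableSet_Ioc).mono_set Set.Ioo_subset_Ioc_self
  intro x hx
  simp only [complex_eq_real_beta x (Set.Ioc_subset_Icc_self hx), Complex.ofReal_re]

lemma betaReal {p q : ℝ} (hp : 0 < p) (hq : 0 < q) :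
    ∫ t in Set.Ioo (0:ℝ) 1, t ^ (p-1) * (1-t) ^ (q-1)
      = Real.Gamma p * Real.Gamma q / Real.Gamma (p+q) := by
  have h := Complex.Gamma_mul_Gamma_eq_betaIntegral (s := (p:ℂ)) (t := (q:ℂ))
    (by simpa using hp) (by simpa using hq)
  have hbeta : Complex.betaIntegral p q = ((∫ t in Set.Ioo (0:ℝ) 1,
      t ^ (p-1) * (1-t) ^ (q-1) : ℝ) : ℂ) := by
    unfold Complex.betaIntegral
    rw [intervalIntegral.integral_congr (g := fun x : ℝ =>
        ((x ^ (p-1) * (1-x) ^ (q-1) : ℝ) : ℂ)) (fun x hx => complex_eq_real_beta x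
          (by rwa [Set.uIcc_of_le (by norm_num : (0:ℝ) ≤ 1)] at hx))]
    rw [intervalIntegral.integral_ofReal,
      intervalIntegral.integral_of_le (by norm_num : (0:ℝ) ≤ 1),
      integral_Ioc_eq_integral_Ioo]
  rw [hbeta] at h
  have hGpos : (0:ℝ) < Real.Gamma (p+q) := Real.Gamma_pos_of_pos (by linarith)
  have h2 : ((Real.Gamma p * Real.Gamma q : ℝ) : ℂ)
      = ((Real.Gamma (p+q) * ∫ t in Set.Ioo (0:ℝ) 1, t ^ (p-1) * (1-t) ^ (q-1) : ℝ) : ℂ) := by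
    push_cast
    rw [← Complex.Gamma_ofReal, ← Complex.Gamma_ofReal, ← Complex.Gamma_ofReal]
    push_cast
    exact h
  have h3 := Complex.ofReal_inj.mp h2
  field_simp
  linarith [h3]

lemma bc_nonneg {a : ℝ} (ha : 0 ≤ a) (m : ℕ) : 0 ≤ bc a m :=
  div_nonneg (poch_nonneg ha m) (by positivity)

lemma swap_lemma (n : ℕ) :
    ∑' m : ℕ, bc ((n:ℝ)+1/2) m * (2:ℝ)⁻¹^m
        * (Real.Gamma ((n:ℝ)+m+1/2) * Real.Gamma (1/2) / Real.Gamma ((n:ℝ)+m+1))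
      = ∫ t in Set.Ioo (0:ℝ) 1,
          t ^ ((n:ℝ)-1/2) * (1-t) ^ (-(1/2):ℝ) * (1 - t/2) ^ (-((n:ℝ)+1/2)) := by
  set a : ℝ := (n:ℝ)+1/2 with ha_def
  have ha : 0 ≤ a := by rw [ha_def]; positivity
  have haN : a ≤ (n:ℕ) + 1 := by rw [ha_def]; norm_num
  set F : ℕ → ℝ → ℝ := fun i t =>
    bc a i * (2:ℝ)⁻¹^i * (t ^ ((n:ℝ)+i+1/2-1) * (1-t) ^ ((1/2:ℝ)-1)) with hF_def
  have hp : ∀ i : ℕ, (0:ℝ) < (n:ℝ)+i+1/2 := fun i => by positivity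
  have hq : (0:ℝ) < 1/2 := by norm_num
  have hF_int : ∀ i : ℕ, IntegrableOn (F i) (Set.Ioo (0:ℝ) 1) := fun i =>
    ((betaIntegrable (hp i) hq).const_mul _)
  have hF_val : ∀ i : ℕ, ∫ t in Set.Ioo (0:ℝ) 1, F i t
      = bc a i * (2:ℝ)⁻¹^i
        * (Real.Gamma ((n:ℝ)+i+1/2) * Real.Gamma (1/2) / Real.Gamma ((n:ℝ)+i+1)) := by
    intro i
    rw [hF_def]
    simp only
    rw [integral_const_mul, betaReal (hp i) hq,
      show (n:ℝ)+i+1/2+1/2 = (n:ℝ)+i+1 by ring]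
  have hF_nonneg : ∀ i : ℕ, ∀ t ∈ Set.Ioo (0:ℝ) 1, 0 ≤ F i t := by
    intro i t ht
    have h1 : (0:ℝ) < t := ht.1
    have h2 : (0:ℝ) < 1 - t := by linarith [ht.2]
    rw [hF_def]
    simp only
    have := bc_nonneg ha i
    positivity
  have hF_norm : ∀ i : ℕ, ∫ t in Set.Ioo (0:ℝ) 1, ‖F i t‖
      = ∫ t in Set.Ioo (0:ℝ) 1, F i t := by
    intro i
    refine setIntegral_congr_fun measurableSet_Ioo fun t ht => ?_
    rw [Real.norm_of_nonneg (hF_nonneg i t ht)]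
  -- bound the Beta values by π
  have hBle : ∀ i : ℕ, Real.Gamma ((n:ℝ)+i+1/2) * Real.Gamma (1/2) / Real.Gamma ((n:ℝ)+i+1)
      ≤ Real.pi := by
    intro i
    have h1 : Real.Gamma ((n:ℝ)+i+1/2) * Real.Gamma (1/2) / Real.Gamma ((n:ℝ)+i+1)
        = ∫ t in Set.Ioo (0:ℝ) 1, t ^ (((n:ℝ)+i+1/2)-1) * (1-t) ^ ((1/2:ℝ)-1) := by
      rw [betaReal (hp i) hq, show (n:ℝ)+i+1/2+1/2 = (n:ℝ)+i+1 by ring]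
    have h2 : Real.pi = ∫ t in Set.Ioo (0:ℝ) 1, t ^ ((1/2:ℝ)-1) * (1-t) ^ ((1/2:ℝ)-1) := by
      rw [betaReal hq hq, show (1:ℝ)/2+1/2 = 1 by ring, Real.Gamma_one,
        Real.Gamma_one_half_eq, div_one, Real.mul_self_sqrt Real.pi_nonneg]
    rw [h1, h2]
    refine setIntegral_mono_on (betaIntegrable (hp i) hq) (betaIntegrable hq hq)
      measurableSet_Ioo fun t ht => ?_
    have h1t : (0:ℝ) < t := ht.1
    have h2t : t ≤ 1 := le_of_lt ht.2
    refine mul_le_mul_of_nonneg_right ?_ (Real.rpow_nonneg (by linarith) _)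
    exact Real.rpow_le_rpow_of_exponent_ge h1t h2t
      (by push_cast; linarith [Nat.cast_nonneg (α := ℝ) i])
  have hsum_bound : Summable (fun i : ℕ => bc a i * (2:ℝ)⁻¹^i * Real.pi) := by
    have h := summable_coeff (bc_bound (N := n) ha haN) (x := (2:ℝ)⁻¹) (by rw [abs_of_pos] <;> norm_num)
    exact h.mul_right Real.pi
  have hF_sum : Summable (fun i : ℕ => ∫ t in Set.Ioo (0:ℝ) 1, ‖F i t‖) := by
    refine Summable.of_nonneg_of_le (fun i => ?_) (fun i => ?_) hsum_bound
    · rw [hF_norm]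
      exact setIntegral_nonneg measurableSet_Ioo (hF_nonneg i)
    · rw [hF_norm, hF_val]
      have hbc := bc_nonneg ha i
      refine mul_le_mul_of_nonneg_left (hBle i) (by positivity)
  have hswap := integral_tsum_of_summable_integral_norm hF_int hF_sum
  have hval : (∑' i, ∫ t in Set.Ioo (0:ℝ) 1, F i t)
      = ∑' m : ℕ, bc a m * (2:ℝ)⁻¹^m
        * (Real.Gamma ((n:ℝ)+m+1/2) * Real.Gamma (1/2) / Real.Gamma ((n:ℝ)+m+1)) :=
    tsum_congr hF_val
  rw [← hval, hswap]
  refine setIntegral_congr_fun measurableSet_Ioo fun t ht => ?_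
  have h1t : (0:ℝ) < t := ht.1
  have h2t : t < 1 := ht.2
  have hterm : ∀ i : ℕ, F i t = (bc a i * (t/2)^i) * (t ^ ((n:ℝ)-1/2) * (1-t) ^ (-(1/2):ℝ)) := by
    intro i
    rw [hF_def]
    simp only
    have hexp : (n:ℝ)+i+1/2-1 = ((n:ℝ)-1/2) + (i:ℝ) := by ring
    rw [hexp, Real.rpow_add h1t, Real.rpow_natCast]
    rw [div_pow]
    have : ((1:ℝ)/2 - 1) = (-(1/2):ℝ) := by norm_num
    rw [this]
    field_simp
    have h2 : ((1:ℝ)/2)^i * 2^i = 1 := by rw [← mul_pow]; norm_num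
    linear_combination (bc a i * (1 - t) ^ (-(1 / 2):ℝ)) * h2
  rw [tsum_congr hterm, tsum_mul_right]
  have hbin : (∑' i, bc a i * (t/2)^i) = (1 - t/2) ^ (-a) :=
    binom_tsum ha haN (by rw [abs_of_pos (by positivity)]; linarith)
  rw [hbin]
  ring

/-- pointwise algebraic identity for the substitution, in terms of `s = √v` -/
lemma subst_pointwise (n : ℕ) {s : ℝ} (hs0 : 0 < s) (hs1 : s < 1) :
    (1/(s*(1+s)^2)) * ((2*s/(1+s)) ^ ((n:ℝ)-1/2)
        * (1-(2*s/(1+s))) ^ (-(1/2):ℝ) * (1-(2*s/(1+s))/2) ^ (-((n:ℝ)+1/2)))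
      = (2:ℝ) ^ ((n:ℝ)-1/2) * ((s*s) ^ ((n:ℝ)/2+1/4-1) * (1-s*s) ^ ((1/2:ℝ)-1)) := by
  have h1s : (0:ℝ) < 1+s := by linarith
  have h2s : (0:ℝ) < 1-s := by linarith
  rw [show 1-(2*s/(1+s)) = (1-s)/(1+s) by field_simp; ring]
  rw [show 1-(2*s/(1+s))/2 = 1/(1+s) by field_simp; ring]
  rw [show (1:ℝ)-s*s = (1-s)*(1+s) by ring]
  have hf0 : (0:ℝ) < 1/(s*(1+s)^2) := by positivity
  have hf1 : (0:ℝ) < (2*s/(1+s)) ^ ((n:ℝ)-1/2) := Real.rpow_pos_of_pos (by positivity) _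
  have hf2 : (0:ℝ) < ((1-s)/(1+s)) ^ (-(1/2):ℝ) := Real.rpow_pos_of_pos (by positivity) _
  have hf3 : (0:ℝ) < (1/(1+s)) ^ (-((n:ℝ)+1/2)) := Real.rpow_pos_of_pos (by positivity) _
  have hg1 : (0:ℝ) < (2:ℝ) ^ ((n:ℝ)-1/2) := Real.rpow_pos_of_pos (by norm_num) _
  have hg2 : (0:ℝ) < (s*s) ^ ((n:ℝ)/2+1/4-1) := Real.rpow_pos_of_pos (by positivity) _
  have hg3 : (0:ℝ) < ((1-s)*(1+s)) ^ ((1/2:ℝ)-1) := Real.rpow_pos_of_pos (by positivity) _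
  have hLpos : (0:ℝ) < (1/(s*(1+s)^2)) * ((2*s/(1+s)) ^ ((n:ℝ)-1/2)
      * ((1-s)/(1+s)) ^ (-(1/2):ℝ) * (1/(1+s)) ^ (-((n:ℝ)+1/2))) := by
    have := mul_pos (mul_pos hf1 hf2) hf3
    exact mul_pos hf0 this
  have hRpos : (0:ℝ) < (2:ℝ) ^ ((n:ℝ)-1/2)
      * ((s*s) ^ ((n:ℝ)/2+1/4-1) * ((1-s)*(1+s)) ^ ((1/2:ℝ)-1)) :=
    mul_pos hg1 (mul_pos hg2 hg3)
  rw [← Real.exp_log hLpos, ← Real.exp_log hRpos]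
  congr 1
  have l0 : Real.log (1/(s*(1+s)^2)) = -(Real.log s + 2*Real.log (1+s)) := by
    rw [one_div, Real.log_inv, Real.log_mul (ne_of_gt hs0) (by positivity), Real.log_pow]
    push_cast; ring
  have l1 : Real.log ((2*s/(1+s)) ^ ((n:ℝ)-1/2))
      = ((n:ℝ)-1/2) * (Real.log 2 + Real.log s - Real.log (1+s)) := by
    rw [Real.log_rpow (by positivity), Real.log_div (by positivity) (ne_of_gt h1s),
      Real.log_mul (by norm_num) (ne_of_gt hs0)]
  have l2 : Real.log (((1-s)/(1+s)) ^ (-(1/2):ℝ))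
      = (-(1/2):ℝ) * (Real.log (1-s) - Real.log (1+s)) := by
    rw [Real.log_rpow (by positivity), Real.log_div (ne_of_gt h2s) (ne_of_gt h1s)]
  have l3 : Real.log ((1/(1+s)) ^ (-((n:ℝ)+1/2)))
      = (-((n:ℝ)+1/2)) * (-Real.log (1+s)) := by
    rw [Real.log_rpow (by positivity), Real.log_div one_ne_zero (ne_of_gt h1s),
      Real.log_one, zero_sub]
  have r1 : Real.log ((2:ℝ) ^ ((n:ℝ)-1/2)) = ((n:ℝ)-1/2) * Real.log 2 :=
    Real.log_rpow (by norm_num) _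
  have r2 : Real.log ((s*s) ^ ((n:ℝ)/2+1/4-1))
      = ((n:ℝ)/2+1/4-1) * (Real.log s + Real.log s) := by
    rw [Real.log_rpow (by positivity), Real.log_mul (ne_of_gt hs0) (ne_of_gt hs0)]
  have r3 : Real.log (((1-s)*(1+s)) ^ ((1/2:ℝ)-1))
      = ((1/2:ℝ)-1) * (Real.log (1-s) + Real.log (1+s)) := by
    rw [Real.log_rpow (by positivity), Real.log_mul (ne_of_gt h2s) (ne_of_gt h1s)]
  rw [Real.log_mul (ne_of_gt hf0) (by positivity),
    Real.log_mul (by positivity) (ne_of_gt hf3),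
    Real.log_mul (ne_of_gt hf1) (ne_of_gt hf2),
    Real.log_mul (ne_of_gt hg1) (by positivity),
    Real.log_mul (ne_of_gt hg2) (ne_of_gt hg3),
    l0, l1, l2, l3, r1, r2, r3]
  ring

lemma change_var (n : ℕ) :
    ∫ t in Set.Ioo (0:ℝ) 1,
        t ^ ((n:ℝ)-1/2) * (1-t) ^ (-(1/2):ℝ) * (1 - t/2) ^ (-((n:ℝ)+1/2))
      = (2:ℝ) ^ ((n:ℝ)-1/2)
        * ∫ v in Set.Ioo (0:ℝ) 1, v ^ (((n:ℝ)/2+1/4)-1) * (1-v) ^ ((1/2:ℝ)-1) := by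
  set φ : ℝ → ℝ := fun v => 2*Real.sqrt v/(1+Real.sqrt v) with hφ
  set φ' : ℝ → ℝ := fun v => 1/(Real.sqrt v*(1+Real.sqrt v)^2) with hφ'
  have himg : φ '' Set.Ioo 0 1 = Set.Ioo (0:ℝ) 1 := by
    ext t
    constructor
    · rintro ⟨v, hv, rfl⟩
      have hs0 : 0 < Real.sqrt v := Real.sqrt_pos.mpr hv.1
      have hs1 : Real.sqrt v < 1 := by
        have := Real.sqrt_lt_sqrt (le_of_lt hv.1) hv.2
        rwa [Real.sqrt_one] at this
      constructor
      · rw [hφ]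
        simp only
        exact div_pos (by linarith) (by linarith)
      · rw [hφ]
        simp only
        rw [div_lt_one (by positivity)]
        linarith
    · rintro ⟨ht0, ht1⟩
      refine ⟨(t/(2-t))^2, ⟨pow_pos (div_pos ht0 (by linarith)) 2, ?_⟩, ?_⟩
      · have h2t : 0 < 2 - t := by linarith
        have : t/(2-t) < 1 := by rw [div_lt_one h2t]; linarith
        calc (t/(2-t))^2 < 1^2 := by
              refine pow_lt_pow_left₀ this (div_nonneg (le_of_lt ht0) (by linarith)) (by norm_num)
          _ = 1 := one_pow 2
      · have h2t : 0 < 2 - t := by linarith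
        have hsq : Real.sqrt ((t/(2-t))^2) = t/(2-t) :=
          Real.sqrt_sq (by positivity)
        rw [hφ]
        simp only [hsq]
        field_simp
        ring
  have hderiv : ∀ v ∈ Set.Ioo (0:ℝ) 1, HasDerivWithinAt φ (φ' v) (Set.Ioo 0 1) v := by
    intro v hv
    have hv0 : (0:ℝ) < v := hv.1
    have hs0 : 0 < Real.sqrt v := Real.sqrt_pos.mpr hv0
    have hsq : HasDerivAt Real.sqrt (1/(2*Real.sqrt v)) v :=
      Real.hasDerivAt_sqrt (ne_of_gt hv0)
    have hnum : HasDerivAt (fun w => 2*Real.sqrt w) (2*(1/(2*Real.sqrt v))) v :=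
      hsq.const_mul 2
    have hden : HasDerivAt (fun w => 1+Real.sqrt w) (1/(2*Real.sqrt v)) v := by
      simpa using hsq.const_add 1
    have hne : 1+Real.sqrt v ≠ 0 := by positivity
    have := hnum.div hden hne
    have heq : (2*(1/(2*Real.sqrt v)) * (1+Real.sqrt v)
        - 2*Real.sqrt v * (1/(2*Real.sqrt v)))/(1+Real.sqrt v)^2 = φ' v := by
      rw [hφ']
      field_simp
      ring
    rw [heq] at this
    exact this.hasDerivWithinAt
  have hinj : Set.InjOn φ (Set.Ioo 0 1) := by
    intro v hv w hw heq
    have hv0 : 0 < Real.sqrt v := Real.sqrt_pos.mpr hv.1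
    have hw0 : 0 < Real.sqrt w := Real.sqrt_pos.mpr hw.1
    rw [hφ] at heq
    simp only at heq
    rw [div_eq_div_iff (by positivity) (by positivity)] at heq
    have hsv : Real.sqrt v = Real.sqrt w := by nlinarith [heq]
    calc v = Real.sqrt v ^ 2 := (Real.sq_sqrt (le_of_lt hv.1)).symm
      _ = Real.sqrt w ^ 2 := by rw [hsv]
      _ = w := Real.sq_sqrt (le_of_lt hw.1)
  have hcv := integral_image_eq_integral_abs_deriv_smul measurableSet_Ioo hderiv hinj
    (fun t => t ^ ((n:ℝ)-1/2) * (1-t) ^ (-(1/2):ℝ) * (1 - t/2) ^ (-((n:ℝ)+1/2)))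
  rw [himg] at hcv
  rw [hcv]
  rw [← integral_const_mul]
  refine setIntegral_congr_fun measurableSet_Ioo fun v hv => ?_
  have hv0 : (0:ℝ) < v := hv.1
  have hs0 : 0 < Real.sqrt v := Real.sqrt_pos.mpr hv0
  have hs1 : Real.sqrt v < 1 := by
    have := Real.sqrt_lt_sqrt (le_of_lt hv0) hv.2
    rwa [Real.sqrt_one] at this
  have key := subst_pointwise n hs0 hs1
  have hvss : Real.sqrt v * Real.sqrt v = v := Real.mul_self_sqrt (le_of_lt hv0)
  rw [hvss] at key
  have habs : |φ' v| = φ' v := abs_of_pos (by rw [hφ']; positivity)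
  rw [smul_eq_mul, habs, hφ', hφ]
  simp only
  rw [← key]

theorem nth_deriv_of_z_at_half (n : ℕ) :
    iteratedDeriv n (fun t => hypF (1/2) (1/2) 1 t) (1/2)
      = poch (1/2) n ^ 2 * Real.sqrt Real.pi / Real.Gamma ((n : ℝ)/2 + 3/4) ^ 2 := by
  rw [hypF_eq_Fn, iteratedDeriv_Fn n (by rw [abs_of_pos] <;> norm_num : |(1/2 : ℝ)| < 1)]
  set K : ℝ := poch (1/2) n ^ 2 / (Real.Gamma ((n:ℝ)+1/2) * Real.Gamma (1/2)) with hK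
  have hG12 : Real.Gamma ((n:ℝ)+1/2) > 0 := Real.Gamma_pos_of_pos (by positivity)
  have hGh : Real.Gamma (1/2 : ℝ) > 0 := Real.Gamma_pos_of_pos (by norm_num)
  have hterm : ∀ m : ℕ, Aco n m * (1/2:ℝ)^m
      = K * (bc ((n:ℝ)+1/2) m * (2:ℝ)⁻¹^m
        * (Real.Gamma ((n:ℝ)+m+1/2) * Real.Gamma (1/2) / Real.Gamma ((n:ℝ)+m+1))) := by
    intro m
    have hG1 : Real.Gamma ((n:ℝ)+m+1/2) = Real.Gamma ((n:ℝ)+1/2) * poch ((n:ℝ)+1/2) m := by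
      have := Gamma_poch (x := (n:ℝ)+1/2) (by positivity) m
      rw [show (n:ℝ)+1/2+m = (n:ℝ)+m+1/2 by ring] at this
      exact this
    have hG2 : Real.Gamma ((n:ℝ)+m+1) = (n+m).factorial := by
      rw [show (n:ℝ)+m+1 = ((n+m : ℕ):ℝ)+1 by push_cast; ring, Real.Gamma_nat_eq_factorial]
    have hpoch : poch (1/2) (m+n) = poch (1/2) n * poch ((n:ℝ)+1/2) m := by
      rw [show m+n = n+m by omega, poch_add, show (1:ℝ)/2+(n:ℝ) = (n:ℝ)+1/2 by ring]
    unfold Aco bc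
    rw [hG1, hG2, hpoch, hK]
    have hf1 : ((m+n).factorial : ℝ) ≠ 0 := by positivity
    have hf2 : ((n+m).factorial : ℝ) ≠ 0 := by positivity
    have hf3 : ((m).factorial : ℝ) ≠ 0 := by positivity
    rw [show m+n = n+m by omega]
    rw [show ((1:ℝ)/2)^m = (2:ℝ)⁻¹^m by norm_num]
    field_simp
  have h1 : Fn n (1/2) = K * ∑' m : ℕ, bc ((n:ℝ)+1/2) m * (2:ℝ)⁻¹^m
        * (Real.Gamma ((n:ℝ)+m+1/2) * Real.Gamma (1/2) / Real.Gamma ((n:ℝ)+m+1)) := by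
    unfold Fn
    rw [tsum_congr hterm, tsum_mul_left]
  rw [h1, swap_lemma, change_var, betaReal (p := (n:ℝ)/2+1/4) (by positivity) (by norm_num)]
  rw [show (n:ℝ)/2+1/4+1/2 = (n:ℝ)/2+3/4 by ring]
  have hdup := Real.Gamma_mul_Gamma_add_half ((n:ℝ)/2+1/4)
  rw [show (n:ℝ)/2+1/4+1/2 = (n:ℝ)/2+3/4 by ring,
    show 2*((n:ℝ)/2+1/4) = (n:ℝ)+1/2 by ring,
    show 1-((n:ℝ)+1/2) = 1/2-(n:ℝ) by ring] at hdup
  have hG34 : Real.Gamma ((n:ℝ)/2+3/4) > 0 := Real.Gamma_pos_of_pos (by positivity)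
  have hG14 : Real.Gamma ((n:ℝ)/2+1/4) > 0 := Real.Gamma_pos_of_pos (by positivity)
  have hGam14 : Real.Gamma ((n:ℝ)/2+1/4)
      = Real.Gamma ((n:ℝ)+1/2) * (2:ℝ)^((1:ℝ)/2-(n:ℝ)) * Real.sqrt Real.pi
        / Real.Gamma ((n:ℝ)/2+3/4) := by
    rw [eq_div_iff (ne_of_gt hG34)]
    exact hdup
  rw [hGam14, Real.Gamma_one_half_eq, hK]
  have hsq : Real.sqrt Real.pi > 0 := Real.sqrt_pos.mpr Real.pi_pos
  have h2pow1 : (2:ℝ)^((n:ℝ)-1/2) > 0 := Real.rpow_pos_of_pos (by norm_num) _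
  have hQeq : (2:ℝ)^((1:ℝ)/2-(n:ℝ)) = ((2:ℝ)^((n:ℝ)-1/2))⁻¹ := by
    rw [show (1:ℝ)/2-(n:ℝ) = -((n:ℝ)-1/2) by ring, Real.rpow_neg (by norm_num)]
  rw [Real.Gamma_one_half_eq] at *
  rw [hQeq]
  field_simp
end

section
/- Let p_n(x) be defined by the Maclaurin expansion sd(u,k) = Σ_{n≥0} p_n(x) u^n / n! with x = k². Then p_{2s}(x) = 0 for all s ≥ 0, p_{4s+1}(1-x) = p_{4s+1}(x), and p_{4s+3}(1-x) = -p_{4s+3}(x) for all s ≥ 0. -/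
open Finset Polynomial FormalMultilinearSeries

def HS (a : ℕ → ℂ) (f : ℂ → ℂ) : Prop := HasFPowerSeriesAt f (ofScalars ℂ a) 0

lemma myofScalars_coeff (a : ℕ → ℂ) (n : ℕ) : (ofScalars ℂ a).coeff n = a n := by
  show (ofScalars ℂ a n) (fun _ => 1) = a n
  rw [ofScalars_apply_eq]; simp

lemma HS_iff {a : ℕ → ℂ} {f : ℂ → ℂ} :
    HS a f ↔ ∀ᶠ z in nhds (0:ℂ), HasSum (fun n => a n * z ^ n) (f z) := by
  rw [HS, hasFPowerSeriesAt_iff]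
  apply Filter.eventually_congr
  filter_upwards with z
  simp [myofScalars_coeff, mul_comm, smul_eq_mul]

lemma HS_unique {a b : ℕ → ℂ} {f : ℂ → ℂ} (ha : HS a f) (hb : HS b f) : a = b := by
  have := ha.eq_formalMultilinearSeries hb
  exact ofScalars_series_injective ℂ ℂ this

lemma HS_zero_coeff {a : ℕ → ℂ} {f : ℂ → ℂ} (hf : HS a f) : a 0 = f 0 := by
  rw [HS_iff] at hf
  have h0 := hf.self_of_nhds
  have h1 : HasSum (fun n => a n * (0:ℂ) ^ n) (a 0) := by
    have := hasSum_single (f := fun n => a n * (0:ℂ) ^ n) 0 (by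
      intro b hb; simp [zero_pow hb])
    simpa using this
  exact h1.unique h0

lemma HS_deriv {a : ℕ → ℂ} {f g : ℂ → ℂ} (hf : HS a f)
    (hg : ∀ᶠ z in nhds (0:ℂ), HasDerivAt f (g z) z) :
    HS (fun n => ((n : ℂ) + 1) * a (n + 1)) g := by
  obtain ⟨r, hball⟩ := hf
  have h1 : HasFPowerSeriesAt (fderiv ℂ f) ((ofScalars ℂ a).derivSeries) 0 := ⟨r, hball.fderiv⟩
  rw [hasFPowerSeriesAt_iff] at h1
  rw [HS_iff]
  filter_upwards [h1, hg] with z hz hdz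
  have hL := (ContinuousLinearMap.apply ℂ ℂ (1:ℂ)).hasSum hz
  simp only [ContinuousLinearMap.apply_apply] at hL
  have hgz : (fderiv ℂ f (0 + z)) 1 = g z := by
    rw [zero_add]
    show deriv f z = g z
    exact hdz.deriv
  rw [hgz] at hL
  convert hL using 1
  · rfl
  funext n
  have hc : ((ofScalars ℂ a).derivSeries.coeff n) 1 = ((n : ℂ) + 1) * a (n + 1) := by
    show ((ofScalars ℂ a).derivSeries n (fun _ => 1)) 1 = _
    rw [derivSeries_apply_diag]
    rw [ofScalars_apply_eq]
    simp [mul_comm]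
  simp only [ContinuousLinearMap.smul_apply, hc]
  rw [smul_eq_mul]; ring

lemma HS_norm_summable {a : ℕ → ℂ} {f : ℂ → ℂ} (hf : HS a f) :
    ∃ t : ℝ, 0 < t ∧ Summable (fun n => ‖a n‖ * t ^ n) := by
  obtain ⟨r, hball⟩ := hf
  obtain ⟨t, ht0, htr⟩ := ENNReal.lt_iff_exists_nnreal_btwn.mp hball.r_pos
  have hrad : (t : ENNReal) < (ofScalars ℂ a).radius := lt_of_lt_of_le htr hball.r_le
  have := (ofScalars ℂ a).summable_norm_mul_pow hrad
  refine ⟨t, by exact_mod_cast ht0, ?_⟩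
  simpa only [ofScalars_norm] using this

lemma HS_mul {a b : ℕ → ℂ} {f g : ℂ → ℂ} (hf : HS a f) (hg : HS b g) :
    HS (fun n => ∑ kl ∈ antidiagonal n, a kl.1 * b kl.2) (fun z => f z * g z) := by
  obtain ⟨t1, ht1, hs1⟩ := HS_norm_summable hf
  obtain ⟨t2, ht2, hs2⟩ := HS_norm_summable hg
  rw [HS_iff] at hf hg ⊢
  have hball : Metric.ball (0:ℂ) (min t1 t2) ∈ nhds (0:ℂ) :=
    Metric.ball_mem_nhds 0 (lt_min ht1 ht2)
  filter_upwards [hf, hg, hball] with z hfz hgz hzb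
  simp only [Metric.mem_ball, dist_zero_right] at hzb
  have hna : Summable fun n => ‖a n * z ^ n‖ := by
    refine Summable.of_nonneg_of_le (fun n => norm_nonneg _) (fun n => ?_) hs1
    rw [norm_mul, norm_pow]
    exact mul_le_mul_of_nonneg_left (pow_le_pow_left₀ (norm_nonneg z)
      (le_of_lt (lt_of_lt_of_le hzb (min_le_left _ _))) n) (norm_nonneg _)
  have hnb : Summable fun n => ‖b n * z ^ n‖ := by
    refine Summable.of_nonneg_of_le (fun n => norm_nonneg _) (fun n => ?_) hs2
    rw [norm_mul, norm_pow]
    exact mul_le_mul_of_nonneg_left (pow_le_pow_left₀ (norm_nonneg z)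
      (le_of_lt (lt_of_lt_of_le hzb (min_le_right _ _))) n) (norm_nonneg _)
  have key := tsum_mul_tsum_eq_tsum_sum_antidiagonal_of_summable_norm hna hnb
  have hsum : Summable (fun n => ∑ kl ∈ antidiagonal n, (a kl.1 * z ^ kl.1) * (b kl.2 * z ^ kl.2)) :=
    (summable_norm_sum_mul_antidiagonal_of_summable_norm hna hnb).of_norm
  have heq : (fun n => ∑ kl ∈ antidiagonal n, (a kl.1 * z ^ kl.1) * (b kl.2 * z ^ kl.2))
      = fun n => (∑ kl ∈ antidiagonal n, a kl.1 * b kl.2) * z ^ n := by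
    funext n
    rw [sum_mul]
    refine sum_congr rfl fun kl hkl => ?_
    obtain ⟨i,j⟩ := kl
    have hij : i + j = n := by simpa using hkl
    rw [← hij, pow_add]
    ring
  rw [heq] at key hsum
  have := hsum.hasSum
  rwa [← key, hfz.tsum_eq, hgz.tsum_eq] at this

lemma HS_comb {a b : ℕ → ℂ} {f g : ℂ → ℂ} (A B : ℂ) (hf : HS a f) (hg : HS b g) :
    HS (fun n => A * a n + B * b n) (fun z => A * f z + B * g z) := by
  rw [HS_iff] at hf hg ⊢
  filter_upwards [hf, hg] with z hfz hgz
  have := (hfz.mul_left A).add (hgz.mul_left B)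
  convert this using 1
  · rfl
  funext n
  ring

/-- From a tsum representation on a ball plus nondegeneracy, get `HS`. -/
lemma HS_of_tsum {c : ℕ → ℂ} {f g : ℂ → ℂ} {R : ℝ}
    (hd : ∀ u ∈ Metric.ball (0:ℂ) R, HasDerivAt f (g u) u)
    (hg1 : g 0 = 1) (hR : 0 < R)
    (hs : ∀ u ∈ Metric.ball (0:ℂ) R, f u = ∑' n, c n * u ^ n) : HS c f := by
  by_cases hex : ∃ u₀ : ℂ, u₀ ∈ Metric.ball (0:ℂ) R ∧ u₀ ≠ 0
      ∧ Summable (fun n => c n * u₀ ^ n)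
  · obtain ⟨u₀, hu₀R, hu₀, hsum⟩ := hex
    have ht : 0 < ‖u₀‖ := norm_pos_iff.mpr hu₀
    have htR : ‖u₀‖ < R := by simpa [Metric.mem_ball, dist_zero_right] using hu₀R
    obtain ⟨C, hC⟩ : ∃ C, ∀ n, ‖c n * u₀ ^ n‖ ≤ C := by
      have h0 := hsum.tendsto_atTop_zero.norm
      simp only [norm_zero] at h0
      obtain ⟨C, hC⟩ := h0.bddAbove_range
      exact ⟨C, fun n => hC (Set.mem_range_self n)⟩
    rw [HS_iff]
    filter_upwards [Metric.ball_mem_nhds (0:ℂ) ht] with z hz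
    simp only [Metric.mem_ball, dist_zero_right] at hz
    have hq : ‖z‖ / ‖u₀‖ < 1 := (div_lt_one ht).mpr hz
    have hsz : Summable (fun n => c n * z ^ n) := by
      apply Summable.of_norm
      apply Summable.of_nonneg_of_le (fun n => norm_nonneg _) (fun n => ?_)
        ((summable_geometric_of_lt_one (by positivity) hq).mul_left C)
      have : ‖c n * z ^ n‖ = ‖c n * u₀ ^ n‖ * (‖z‖ / ‖u₀‖) ^ n := by
        have hne : ‖u₀‖ ^ n ≠ 0 := by positivity
        rw [norm_mul, norm_mul, norm_pow, norm_pow, div_pow, mul_assoc,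
          mul_comm (‖u₀‖ ^ n), div_mul_cancel₀ _ hne]
      rw [this]
      exact mul_le_mul_of_nonneg_right (hC n) (by positivity)
    rw [hs z (by rw [Metric.mem_ball, dist_zero_right]; linarith)]
    exact hsz.hasSum
  · exfalso
    push_neg at hex
    have hf0 : ∀ u ∈ Metric.ball (0:ℂ) R, f u = 0 := by
      intro u huR
      rcases eq_or_ne u 0 with rfl | hu
      · -- continuity at 0
        have hcont : ContinuousAt f 0 := (hd 0 (by simpa using hR)).continuousAt
        have hpun : ∀ᶠ z in nhdsWithin (0:ℂ) {(0:ℂ)}ᶜ, f z = 0 := by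
          filter_upwards [self_mem_nhdsWithin,
            nhdsWithin_le_nhds (Metric.ball_mem_nhds (0:ℂ) hR)] with z hz hzR
          rw [hs z hzR, tsum_eq_zero_of_not_summable (hex z hzR hz)]
        have h1 : Filter.Tendsto f (nhdsWithin (0:ℂ) {(0:ℂ)}ᶜ) (nhds (f 0)) :=
          hcont.continuousWithinAt.tendsto
        have h2 : Filter.Tendsto f (nhdsWithin (0:ℂ) {(0:ℂ)}ᶜ) (nhds 0) := by
          apply Filter.Tendsto.congr' (Filter.EventuallyEq.symm hpun) tendsto_const_nhds
        exact tendsto_nhds_unique h1 h2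
      · rw [hs u huR, tsum_eq_zero_of_not_summable (hex u huR hu)]
    have hgz : ∀ u ∈ Metric.ball (0:ℂ) R, g u = 0 := by
      intro u huR
      have hev : f =ᶠ[nhds u] (fun _ => (0:ℂ)) := by
        filter_upwards [Metric.isOpen_ball.mem_nhds huR] with z hz using hf0 z hz
      have h0 : HasDerivAt f 0 u := by
        exact (hasDerivAt_const u (0:ℂ)).congr_of_eventuallyEq hev
      exact (hd u huR).unique h0
    have := hgz 0 (by simpa using hR)
    rw [hg1] at this
    exact one_ne_zero this

lemma scalar_rec {c : ℕ → ℂ} {f g : ℂ → ℂ} {R : ℝ} {A B : ℂ}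
    (hR : 0 < R)
    (hd : ∀ u ∈ Metric.ball (0:ℂ) R, HasDerivAt f (g u) u)
    (hd2 : ∀ u ∈ Metric.ball (0:ℂ) R, HasDerivAt g (A * f u + B * f u ^ 3) u)
    (hf0 : f 0 = 0) (hg1 : g 0 = 1)
    (hs : ∀ u ∈ Metric.ball (0:ℂ) R, f u = ∑' n, c n * u ^ n) :
    c 0 = 0 ∧ c 1 = 1 ∧ ∀ n : ℕ,
      ((n:ℂ)+1) * (((n:ℂ)+2) * c (n+2)) =
        A * c n + B * ∑ ij ∈ antidiagonal n,
          (∑ kl ∈ antidiagonal ij.1, c kl.1 * c kl.2) * c ij.2 := by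
  have hball := Metric.ball_mem_nhds (0:ℂ) hR
  have hf : HS c f := HS_of_tsum hd hg1 hR hs
  have hg : HS (fun n => ((n:ℂ)+1) * c (n+1)) g :=
    HS_deriv hf (by filter_upwards [hball] with u hu using hd u hu)
  have hN : HS (fun n => ((n:ℂ)+1) * ((((n+1:ℕ):ℂ)+1) * c (n+1+1)))
      (fun u => A * f u + B * f u ^ 3) :=
    HS_deriv hg (by filter_upwards [hball] with u hu using hd2 u hu)
  have hcube : HS (fun n => ∑ ij ∈ antidiagonal n,
      (∑ kl ∈ antidiagonal ij.1, c kl.1 * c kl.2) * c ij.2)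
      (fun z => f z * f z * f z) := by
    have h2 := HS_mul hf hf
    have h3 := HS_mul h2 hf
    exact h3
  have hfun : (fun z => A * f z + B * (f z * f z * f z))
      = (fun u => A * f u + B * f u ^ 3) := by
    funext z; ring
  have hcomb : HS (fun n => A * c n + B * ∑ ij ∈ antidiagonal n,
      (∑ kl ∈ antidiagonal ij.1, c kl.1 * c kl.2) * c ij.2)
      (fun u => A * f u + B * f u ^ 3) := by
    have h := HS_comb A B hf hcube
    rwa [hfun] at h
  have hu := HS_unique hN hcomb
  refine ⟨?_, ?_, ?_⟩
  · rw [HS_zero_coeff hf, hf0]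
  · have := HS_zero_coeff hg
    rw [hg1] at this
    simpa using this
  · intro n
    have := congrFun hu n
    rw [← this]
    push_cast
    ring

lemma poly_eq_of_Ioo {P Q : Polynomial ℚ}
    (h : ∀ x : ℝ, x ∈ Set.Ioo (0:ℝ) 1 → aeval (x:ℂ) P = aeval (x:ℂ) Q) : P = Q := by
  have hinj : Function.Injective (algebraMap ℚ ℂ) := (algebraMap ℚ ℂ).injective
  apply Polynomial.map_injective _ hinj
  apply Polynomial.eq_of_infinite_eval_eq
  apply Set.Infinite.mono (s := (fun x : ℝ => (x:ℂ)) '' Set.Ioo 0 1)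
  · rintro z ⟨x, hx, rfl⟩
    have := h x hx
    simpa only [Set.mem_setOf_eq, eval_map, ← aeval_def] using this
  · apply Set.Infinite.image
    · intro a _ b _ hab
      simpa using hab
    · exact Set.Ioo_infinite (by norm_num : (0:ℝ) < 1)

lemma parity (p : ℕ → Polynomial ℚ) (hp0 : p 0 = 0) (hp1 : p 1 = 1)
    (hrec : ∀ n : ℕ, p (n+2) = (2*X-1) * p n - (2*X*(1-X)) *
      ∑ ij ∈ antidiagonal n, ∑ kl ∈ antidiagonal ij.1,
        ((n.factorial : ℚ)/(kl.1.factorial * kl.2.factorial * ij.2.factorial)) •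
          (p kl.1 * p kl.2 * p ij.2)) :
    ∀ n : ℕ, (Even n → p n = 0) ∧
      (Odd n → (p n).comp (1 - X) = (-1)^(n/2) * p n) := by
  intro n
  induction n using Nat.strong_induction_on with
  | _ n ih =>
    match n with
    | 0 =>
      refine ⟨fun _ => hp0, fun h => absurd h (by simp)⟩
    | 1 =>
      refine ⟨fun h => absurd h (by simp), fun _ => by simp [hp1]⟩
    | (n+2) =>
      constructor
      · intro heven
        have hn : Even n := by
          rcases heven with ⟨m, hm⟩; exact ⟨m-1, by omega⟩
        rw [hrec n, (ih n (by omega)).1 hn, mul_zero, zero_sub, neg_eq_zero]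
        rw [Finset.sum_eq_zero, mul_zero]
        intro ij hij
        rw [Finset.sum_eq_zero]
        intro kl hkl
        have h2 : ij.1 + ij.2 = n := by simpa using hij
        have h1 : kl.1 + kl.2 = ij.1 := by simpa using hkl
        rcases Nat.even_or_odd kl.1 with hk | hk
        · rw [(ih kl.1 (by omega)).1 hk]; simp
        rcases Nat.even_or_odd kl.2 with hl | hl
        · rw [(ih kl.2 (by omega)).1 hl]; simp
        rcases Nat.even_or_odd ij.2 with hj | hj
        · rw [(ih ij.2 (by omega)).1 hj]; simp
        · exfalso
          obtain ⟨a, ha⟩ := hk; obtain ⟨b, hb⟩ := hl; obtain ⟨c, hc⟩ := hj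
          rcases hn with ⟨m, hm⟩
          omega
      · intro hodd
        have hn : Odd n := by rcases hodd with ⟨m, hm⟩; exact ⟨m-1, by omega⟩
        have hdiv : (n+2)/2 = n/2 + 1 := by omega
        have hTn := (ih n (by omega)).2 hn
        rw [hrec n, hdiv]
        have hSum : ∑ ij ∈ antidiagonal n, ∑ kl ∈ antidiagonal ij.1,
            ((((n.factorial : ℚ)/(kl.1.factorial * kl.2.factorial * ij.2.factorial)) •
              (p kl.1 * p kl.2 * p ij.2)).comp (1 - X)) =
            (-1)^(n/2 + 1) * ∑ ij ∈ antidiagonal n, ∑ kl ∈ antidiagonal ij.1,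
              (((n.factorial : ℚ)/(kl.1.factorial * kl.2.factorial * ij.2.factorial)) •
                (p kl.1 * p kl.2 * p ij.2)) := by
          rw [Finset.mul_sum]
          refine Finset.sum_congr rfl fun ij hij => ?_
          rw [Finset.mul_sum]
          refine Finset.sum_congr rfl fun kl hkl => ?_
          have h2 : ij.1 + ij.2 = n := by simpa using hij
          have h1 : kl.1 + kl.2 = ij.1 := by simpa using hkl
          rw [Polynomial.smul_comp]
          rcases Nat.even_or_odd kl.1 with hk | hk
          · rw [(ih kl.1 (by omega)).1 hk]; simp
          rcases Nat.even_or_odd kl.2 with hl | hl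
          · rw [(ih kl.2 (by omega)).1 hl]; simp
          rcases Nat.even_or_odd ij.2 with hj | hj
          · rw [(ih ij.2 (by omega)).1 hj]; simp
          -- all odd
          obtain ⟨a, ha⟩ := hk; obtain ⟨b, hb⟩ := hl; obtain ⟨c, hc⟩ := hj
          have hk2 : kl.1 / 2 = a := by omega
          have hl2 : kl.2 / 2 = b := by omega
          have hj2 : ij.2 / 2 = c := by omega
          have hTk := (ih kl.1 (by omega)).2 ⟨a, ha⟩
          have hTl := (ih kl.2 (by omega)).2 ⟨b, hb⟩
          have hTj := (ih ij.2 (by omega)).2 ⟨c, hc⟩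
          rw [hk2] at hTk; rw [hl2] at hTl; rw [hj2] at hTj
          have hexp : n/2 + 1 = a + b + c + 2 := by
            rcases hn with ⟨m, hm⟩; omega
          rw [Polynomial.mul_comp, Polynomial.mul_comp, hTk, hTl, hTj, hexp]
          rw [smul_eq_C_mul, smul_eq_C_mul]
          rw [pow_add, pow_add, pow_add]
          ring
        simp only [Polynomial.sub_comp, Polynomial.mul_comp, Polynomial.sum_comp,
          Polynomial.X_comp, Polynomial.one_comp, Polynomial.ofNat_comp]
        rw [hTn, hSum, pow_succ]
        push_cast
        ring

lemma eval_step {x A B : ℂ} (q : ℕ → Polynomial ℚ) (n : ℕ)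
    (hA : aeval x (2*X-1 : Polynomial ℚ) = A)
    (hB : aeval x (2*X*(1-X) : Polynomial ℚ) = -B)
    (h : ((n:ℂ)+1) * (((n:ℂ)+2) * (aeval x (q (n+2)) / (n+2).factorial)) =
        A * (aeval x (q n) / n.factorial) + B * ∑ ij ∈ antidiagonal n,
          (∑ kl ∈ antidiagonal ij.1,
            (aeval x (q kl.1)/kl.1.factorial) * (aeval x (q kl.2)/kl.2.factorial))
          * (aeval x (q ij.2)/ij.2.factorial)) :
    aeval x (q (n+2)) = aeval x ((2*X-1) * q n - (2*X*(1-X)) *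
      ∑ ij ∈ antidiagonal n, ∑ kl ∈ antidiagonal ij.1,
        ((n.factorial : ℚ)/(kl.1.factorial * kl.2.factorial * ij.2.factorial)) •
          (q kl.1 * q kl.2 * q ij.2)) := by
  have hfac : ∀ m : ℕ, ((m.factorial : ℂ)) ≠ 0 :=
    fun m => Nat.cast_ne_zero.mpr m.factorial_ne_zero
  have hn1 : ((n:ℂ)+1) ≠ 0 := by
    have : ((n+1:ℕ):ℂ) ≠ 0 := Nat.cast_ne_zero.mpr (by omega)
    push_cast at this; exact this
  have hn2 : ((n:ℂ)+2) ≠ 0 := by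
    have : ((n+2:ℕ):ℂ) ≠ 0 := Nat.cast_ne_zero.mpr (by omega)
    push_cast at this; exact this
  have hfs : (((n+2).factorial : ℕ) : ℂ) = ((n:ℂ)+1) * (((n:ℂ)+2) * n.factorial) := by
    rw [show n+2 = (n+1)+1 from rfl, Nat.factorial_succ, Nat.factorial_succ]
    push_cast; ring
  have haux : ((n:ℂ)+1) * (((n:ℂ)+2) * (aeval x (q (n+2)) / (n+2).factorial))
      = aeval x (q (n+2)) / n.factorial := by
    rw [hfs]
    field_simp [hfac n, hn1, hn2]
  have h1 : aeval x (q (n+2)) = (n.factorial : ℂ) *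
      (((n:ℂ)+1) * (((n:ℂ)+2) * (aeval x (q (n+2)) / (n+2).factorial))) := by
    rw [haux]
    field_simp [hfac n]
  rw [h] at h1
  rw [h1, map_sub, map_mul, map_mul, hA, hB, map_sum]
  have hterm : ∀ ij ∈ antidiagonal n,
      aeval x (∑ kl ∈ antidiagonal ij.1,
        ((n.factorial : ℚ)/(kl.1.factorial * kl.2.factorial * ij.2.factorial)) •
          (q kl.1 * q kl.2 * q ij.2)) =
      (n.factorial : ℂ) * ((∑ kl ∈ antidiagonal ij.1,
        (aeval x (q kl.1)/kl.1.factorial) * (aeval x (q kl.2)/kl.2.factorial))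
        * (aeval x (q ij.2)/ij.2.factorial)) := by
    intro ij _
    rw [map_sum, Finset.sum_mul, Finset.mul_sum]
    refine Finset.sum_congr rfl fun kl _ => ?_
    rw [map_smul, map_mul, map_mul, Rat.smul_def]
    push_cast
    field_simp
  rw [Finset.sum_congr rfl hterm, ← Finset.mul_sum]
  have hcan : (n.factorial : ℂ) * (aeval x (q n) / n.factorial) = aeval x (q n) := by
    rw [← mul_div_assoc]
    exact mul_div_cancel_left₀ _ (hfac n)
  rw [mul_add, ← mul_assoc, mul_comm ((n.factorial:ℂ)) A, mul_assoc, hcan]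
  ring


/-- Symmetries of the Maclaurin coefficients `p_n(x)` of the Jacobi elliptic function
`sd(u,k)` (with `x = k²`): here `sd` is characterized as the analytic solution of
`y'' = (2x-1)y - 2x(1-x)y³`, `y(0) = 0`, `y'(0) = 1`, and the polynomials
`p n ∈ ℚ[X]` give its Maclaurin expansion `sd(u) = Σ p_n(x) uⁿ/n!`. Then
`p_{2s} = 0`, `p_{4s+1}(1-x) = p_{4s+1}(x)` and `p_{4s+3}(1-x) = -p_{4s+3}(x)`. -/
theorem sd_maclaurin_coefficients_symmetry
    (sd sd' : ℝ → ℂ → ℂ) (r : ℝ → ℝ) (p : ℕ → Polynomial ℚ)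
    (hr : ∀ x ∈ Set.Ioo (0 : ℝ) 1, 0 < r x)
    (hode : ∀ x ∈ Set.Ioo (0 : ℝ) 1, ∀ u ∈ Metric.ball (0 : ℂ) (r x),
      HasDerivAt (sd x) (sd' x u) u ∧
      HasDerivAt (sd' x)
        ((2 * (x : ℂ) - 1) * sd x u - 2 * (x : ℂ) * (1 - (x : ℂ)) * sd x u ^ 3) u)
    (hinit : ∀ x ∈ Set.Ioo (0 : ℝ) 1, sd x 0 = 0 ∧ sd' x 0 = 1)
    (hser : ∀ x ∈ Set.Ioo (0 : ℝ) 1, ∀ u ∈ Metric.ball (0 : ℂ) (r x),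
      sd x u = ∑' n : ℕ, Polynomial.aeval (x : ℂ) (p n) * u ^ n / n.factorial) :
    ∀ s : ℕ, p (2 * s) = 0 ∧
      (p (4 * s + 1)).comp (1 - Polynomial.X) = p (4 * s + 1) ∧
      (p (4 * s + 3)).comp (1 - Polynomial.X) = -(p (4 * s + 3)) := by
  have key : ∀ x : ℝ, x ∈ Set.Ioo (0:ℝ) 1 →
      (aeval (x:ℂ) (p 0) / ((0:ℕ).factorial : ℂ) = 0) ∧
      (aeval (x:ℂ) (p 1) / ((1:ℕ).factorial : ℂ) = 1) ∧
      ∀ n : ℕ, ((n:ℂ)+1) * (((n:ℂ)+2) * (aeval (x:ℂ) (p (n+2)) / (n+2).factorial)) =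
        (2*(x:ℂ)-1) * (aeval (x:ℂ) (p n) / n.factorial)
        + (-(2*(x:ℂ)*(1-(x:ℂ)))) * ∑ ij ∈ antidiagonal n,
            (∑ kl ∈ antidiagonal ij.1,
              (aeval (x:ℂ) (p kl.1) / kl.1.factorial) * (aeval (x:ℂ) (p kl.2) / kl.2.factorial))
            * (aeval (x:ℂ) (p ij.2) / ij.2.factorial) := by
    intro x hx
    have hd2 : ∀ u ∈ Metric.ball (0:ℂ) (r x), HasDerivAt (sd' x)
        ((2*(x:ℂ)-1) * sd x u + (-(2*(x:ℂ)*(1-(x:ℂ)))) * sd x u ^ 3) u := by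
      intro u hu
      have h := (hode x hx u hu).2
      have he : (2*(x:ℂ)-1) * sd x u + (-(2*(x:ℂ)*(1-(x:ℂ)))) * sd x u ^ 3
          = (2 * (x : ℂ) - 1) * sd x u - 2 * (x : ℂ) * (1 - (x : ℂ)) * sd x u ^ 3 := by
        ring
      rw [he]; exact h
    have hs : ∀ u ∈ Metric.ball (0:ℂ) (r x),
        sd x u = ∑' n : ℕ, (aeval (x:ℂ) (p n) / n.factorial) * u ^ n := by
      intro u hu
      rw [hser x hx u hu]
      exact tsum_congr fun n => by ring
    exact scalar_rec (hr x hx) (fun u hu => (hode x hx u hu).1) hd2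
      (hinit x hx).1 (hinit x hx).2 hs
  have hp0 : p 0 = 0 := by
    apply poly_eq_of_Ioo; intro x hx
    have h0 := (key x hx).1
    rw [map_zero]
    simpa [Nat.factorial_zero] using h0
  have hp1 : p 1 = 1 := by
    apply poly_eq_of_Ioo; intro x hx
    have h1 := (key x hx).2.1
    rw [map_one]
    simpa [Nat.factorial_one] using h1
  have hprec : ∀ n : ℕ, p (n+2) = (2*X-1) * p n - (2*X*(1-X)) *
      ∑ ij ∈ antidiagonal n, ∑ kl ∈ antidiagonal ij.1,
        ((n.factorial : ℚ)/(kl.1.factorial * kl.2.factorial * ij.2.factorial)) •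
          (p kl.1 * p kl.2 * p ij.2) := by
    intro n
    apply poly_eq_of_Ioo; intro x hx
    have hA : aeval ((x:ℝ):ℂ) (2*X-1 : Polynomial ℚ) = 2*((x:ℝ):ℂ)-1 := by
      rw [map_sub, map_mul, aeval_X, map_one, map_ofNat]
    have hB : aeval ((x:ℝ):ℂ) (2*X*(1-X) : Polynomial ℚ) = -(-(2*((x:ℝ):ℂ)*(1-((x:ℝ):ℂ)))) := by
      rw [map_mul, map_mul, map_sub, map_one, aeval_X, map_ofNat, neg_neg]
    exact eval_step p n hA hB ((key x hx).2.2 n)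
  have par := parity p hp0 hp1 hprec
  intro s
  refine ⟨(par (2*s)).1 ⟨s, by ring⟩, ?_, ?_⟩
  · have h := (par (4*s+1)).2 ⟨2*s, by omega⟩
    rw [show (4*s+1)/2 = 2*s from by omega, pow_mul, neg_one_sq, one_pow, one_mul] at h
    exact h
  · have h := (par (4*s+3)).2 ⟨2*s+1, by omega⟩
    rw [show (4*s+3)/2 = 2*s+1 from by omega, pow_succ, pow_mul, neg_one_sq, one_pow,
      one_mul, neg_one_mul] at h
    exact h
end

section
/- Let q_n(x) be defined by the Maclaurin expansion u·ds(u,k) = Σ_{n≥0} q_n(x) u^n / n! with x = k², where ds = dn/sn. Then q_{2s+1}(x) = 0 for all s ≥ 0, q_{4s}(1-x) = q_{4s}(x), and q_{4s+2}(1-x) = -q_{4s+2}(x) for all s ≥ 0. -/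
open Filter Set Metric Complex Polynomial FormalMultilinearSeries
open scoped Topology NNReal ENNReal

noncomputable section

namespace JacobiQAux

abbrev E3 := ℂ × ℂ × ℂ

def vf (c : ℂ) (p : E3) : E3 := (p.2.1 * p.2.2, -(p.1 * p.2.2), -c * p.1 * p.2.1)

lemma dist_mul_mul (a b a' b' : ℂ) :
    dist (a * b) (a' * b') ≤ ‖a‖ * dist b b' + ‖b'‖ * dist a a' := by
  simp only [dist_eq_norm]
  calc ‖a * b - a' * b'‖ = ‖a * (b - b') + (a - a') * b'‖ := by ring_nf
    _ ≤ ‖a * (b - b')‖ + ‖(a - a') * b'‖ := norm_add_le _ _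
    _ = ‖a‖ * ‖b - b'‖ + ‖b'‖ * ‖a - a'‖ := by rw [norm_mul, norm_mul]; ring

lemma vf_lip (c : ℂ) {M : ℝ} (hM : 0 ≤ M) :
    LipschitzOnWith (Real.toNNReal (2 * M * (1 + ‖c‖))) (vf c) (closedBall (0 : E3) M) := by
  apply LipschitzOnWith.of_dist_le_mul
  intro p hp q hq
  rw [mem_closedBall_zero_iff] at hp hq
  have hp1 : ‖p.1‖ ≤ M := le_trans (norm_fst_le p) hp
  have hp21 : ‖p.2.1‖ ≤ M := le_trans (norm_fst_le p.2) (le_trans (norm_snd_le p) hp)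
  have hp22 : ‖p.2.2‖ ≤ M := le_trans (norm_snd_le p.2) (le_trans (norm_snd_le p) hp)
  have hq1 : ‖q.1‖ ≤ M := le_trans (norm_fst_le q) hq
  have hq21 : ‖q.2.1‖ ≤ M := le_trans (norm_fst_le q.2) (le_trans (norm_snd_le q) hq)
  have hq22 : ‖q.2.2‖ ≤ M := le_trans (norm_snd_le q.2) (le_trans (norm_snd_le q) hq)
  set d := dist p q with hd
  have hdnn : 0 ≤ d := dist_nonneg
  have h1 : dist p.1 q.1 ≤ d := by rw [hd, Prod.dist_eq]; exact le_max_left _ _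
  have h2 : dist p.2 q.2 ≤ d := by rw [hd, Prod.dist_eq]; exact le_max_right _ _
  have h21 : dist p.2.1 q.2.1 ≤ d := le_trans (by rw [Prod.dist_eq]; exact le_max_left _ _) h2
  have h22 : dist p.2.2 q.2.2 ≤ d := le_trans (by rw [Prod.dist_eq]; exact le_max_right _ _) h2
  have key : ∀ a b a' b' : ℂ, ‖a‖ ≤ M → ‖b'‖ ≤ M → dist a a' ≤ d → dist b b' ≤ d →
      dist (a * b) (a' * b') ≤ 2 * M * d := by
    intro a b a' b' ha hb' haa hbb
    calc dist (a * b) (a' * b') ≤ ‖a‖ * dist b b' + ‖b'‖ * dist a a' := dist_mul_mul _ _ _ _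
      _ ≤ M * d + M * d := by
          gcongr <;> first | exact (norm_nonneg _).trans ‹_› | assumption
      _ = 2 * M * d := by ring
  have c1 : dist (p.2.1 * p.2.2) (q.2.1 * q.2.2) ≤ 2 * M * d := key _ _ _ _ hp21 hq22 h21 h22
  have c2 : dist (-(p.1 * p.2.2)) (-(q.1 * q.2.2)) ≤ 2 * M * d := by
    rw [dist_neg_neg]; exact key _ _ _ _ hp1 hq22 h1 h22
  have c3 : dist (-c * p.1 * p.2.1) (-c * q.1 * q.2.1) ≤ ‖c‖ * (2 * M * d) := by
    have : dist (-c * (p.1 * p.2.1)) (-c * (q.1 * q.2.1)) ≤ ‖c‖ * (2 * M * d) := by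
      have heq : dist (-c * (p.1 * p.2.1)) (-c * (q.1 * q.2.1)) = ‖c‖ * dist (p.1 * p.2.1) (q.1 * q.2.1) := by
        rw [dist_eq_norm, dist_eq_norm, ← mul_sub, norm_mul, norm_neg]
      rw [heq]
      exact mul_le_mul_of_nonneg_left (key _ _ _ _ hp1 hq21 h1 h21) (norm_nonneg c)
    simpa [mul_assoc] using this
  have hK : (Real.toNNReal (2 * M * (1 + ‖c‖)) : ℝ) = 2 * M * (1 + ‖c‖) :=
    Real.coe_toNNReal _ (by positivity)
  rw [hK]
  have : dist (vf c p) (vf c q) ≤ max (2 * M * d) (max (2 * M * d) (‖c‖ * (2 * M * d))) := by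
    rw [vf, vf, Prod.dist_eq, Prod.dist_eq]
    exact max_le_max c1 (max_le_max c2 c3)
  refine this.trans ?_
  have hc : 0 ≤ ‖c‖ := norm_nonneg c
  have hx1 : 0 ≤ M * d := mul_nonneg hM hdnn
  have hx2 : 0 ≤ M * d * ‖c‖ := mul_nonneg hx1 hc
  apply max_le (by nlinarith) (max_le (by nlinarith) (by nlinarith))


lemma ode_unique (c : ℂ) {ρ : ℝ} (hρ : 0 < ρ) {A B C A' B' C' : ℂ → ℂ}
    (h : ∀ u ∈ ball (0 : ℂ) ρ, HasDerivAt A (B u * C u) u ∧ HasDerivAt B (-(A u * C u)) u ∧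
      HasDerivAt C (-c * A u * B u) u)
    (h' : ∀ u ∈ ball (0 : ℂ) ρ, HasDerivAt A' (B' u * C' u) u ∧ HasDerivAt B' (-(A' u * C' u)) u ∧
      HasDerivAt C' (-c * A' u * B' u) u)
    (e1 : A 0 = A' 0) (e2 : B 0 = B' 0) (e3 : C 0 = C' 0) :
    Set.EqOn A A' (ball 0 ρ) ∧ Set.EqOn B B' (ball 0 ρ) ∧ Set.EqOn C C' (ball 0 ρ) := by
  have hball : IsOpen (ball (0 : ℂ) ρ) := isOpen_ball
  have hdA : DifferentiableOn ℂ A (ball 0 ρ) :=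
    fun u hu => ((h u hu).1.differentiableAt).differentiableWithinAt
  have hdB : DifferentiableOn ℂ B (ball 0 ρ) :=
    fun u hu => ((h u hu).2.1.differentiableAt).differentiableWithinAt
  have hdC : DifferentiableOn ℂ C (ball 0 ρ) :=
    fun u hu => ((h u hu).2.2.differentiableAt).differentiableWithinAt
  have hdA' : DifferentiableOn ℂ A' (ball 0 ρ) :=
    fun u hu => ((h' u hu).1.differentiableAt).differentiableWithinAt
  have hdB' : DifferentiableOn ℂ B' (ball 0 ρ) :=
    fun u hu => ((h' u hu).2.1.differentiableAt).differentiableWithinAt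
  have hdC' : DifferentiableOn ℂ C' (ball 0 ρ) :=
    fun u hu => ((h' u hu).2.2.differentiableAt).differentiableWithinAt
  -- bound on the compact ball of radius ρ/2
  have hsub : closedBall (0 : ℂ) (ρ / 2) ⊆ ball 0 ρ := closedBall_subset_ball (by linarith)
  have hFc : ContinuousOn (fun u : ℂ => ((A u, B u, C u) : E3)) (closedBall 0 (ρ / 2)) := by
    apply ContinuousOn.prodMk (hdA.continuousOn.mono hsub)
    exact ContinuousOn.prodMk (hdB.continuousOn.mono hsub) (hdC.continuousOn.mono hsub)
  have hGc : ContinuousOn (fun u : ℂ => ((A' u, B' u, C' u) : E3)) (closedBall 0 (ρ / 2)) := by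
    apply ContinuousOn.prodMk (hdA'.continuousOn.mono hsub)
    exact ContinuousOn.prodMk (hdB'.continuousOn.mono hsub) (hdC'.continuousOn.mono hsub)
  obtain ⟨M1, hM1⟩ := (isCompact_closedBall (0 : ℂ) (ρ / 2)).exists_bound_of_continuousOn hFc
  obtain ⟨M2, hM2⟩ := (isCompact_closedBall (0 : ℂ) (ρ / 2)).exists_bound_of_continuousOn hGc
  set M : ℝ := max 0 (max M1 M2) with hM
  have hM0 : 0 ≤ M := le_max_left _ _
  -- the real solutions
  set f : ℝ → E3 := fun t => (A t, B t, C t) with hf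
  set g : ℝ → E3 := fun t => (A' t, B' t, C' t) with hg
  have hmem : ∀ t : ℝ, t ∈ Ioo (-(ρ / 2)) (ρ / 2) → (t : ℂ) ∈ ball (0 : ℂ) ρ ∧
      (t : ℂ) ∈ closedBall (0 : ℂ) (ρ / 2) := by
    intro t ht
    have habs : |t| ≤ ρ / 2 := le_of_lt (abs_lt.mpr ⟨ht.1, ht.2⟩)
    have : ‖(t : ℂ)‖ ≤ ρ / 2 := by rwa [Complex.norm_real, Real.norm_eq_abs]
    exact ⟨mem_ball_zero_iff.mpr (lt_of_le_of_lt this (by linarith)), mem_closedBall_zero_iff.mpr this⟩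
  have hfd : ∀ t ∈ Ioo (-(ρ / 2)) (ρ / 2),
      HasDerivAt f (vf c (f t)) t ∧ f t ∈ closedBall (0 : E3) M := by
    intro t ht
    obtain ⟨htb, htcb⟩ := hmem t ht
    refine ⟨?_, ?_⟩
    · exact ((h _ htb).1.comp_ofReal).prodMk
        (((h _ htb).2.1.comp_ofReal).prodMk ((h _ htb).2.2.comp_ofReal))
    · rw [mem_closedBall_zero_iff]
      exact le_trans (hM1 _ htcb) (le_trans (le_max_left _ _) (le_max_right _ _))
  have hgd : ∀ t ∈ Ioo (-(ρ / 2)) (ρ / 2),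
      HasDerivAt g (vf c (g t)) t ∧ g t ∈ closedBall (0 : E3) M := by
    intro t ht
    obtain ⟨htb, htcb⟩ := hmem t ht
    refine ⟨?_, ?_⟩
    · exact ((h' _ htb).1.comp_ofReal).prodMk
        (((h' _ htb).2.1.comp_ofReal).prodMk ((h' _ htb).2.2.comp_ofReal))
    · rw [mem_closedBall_zero_iff]
      exact le_trans (hM2 _ htcb) (le_trans (le_max_right _ _) (le_max_right _ _))
  have heqon : Set.EqOn f g (Ioo (-(ρ / 2)) (ρ / 2)) := by
    apply ODE_solution_unique_of_mem_Ioo (v := fun _ => vf c)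
      (s := fun _ => closedBall (0 : E3) M) (fun _ _ => vf_lip c hM0)
      (t₀ := 0) (by constructor <;> [linarith; linarith]) hfd hgd
    simp only [hf, hg, Complex.ofReal_zero, e1, e2, e3]
  -- sequence of real points converging to 0
  set w : ℕ → ℂ := fun n => ((ρ / 2 / (n + 2) : ℝ) : ℂ) with hw
  have hwpos : ∀ n : ℕ, (0 : ℝ) < ρ / 2 / (n + 2) := by
    intro n; positivity
  have hwlt : ∀ n : ℕ, ρ / 2 / (n + 2) < ρ / 2 := by
    intro n
    apply div_lt_self (by linarith)
    have : (0 : ℝ) ≤ (n : ℝ) := Nat.cast_nonneg n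
    linarith
  have hwmem : ∀ n : ℕ, (ρ / 2 / (n + 2) : ℝ) ∈ Ioo (-(ρ / 2)) (ρ / 2) := by
    intro n
    exact ⟨lt_trans (by linarith) (hwpos n), hwlt n⟩
  have hwtend : Tendsto w atTop (𝓝[≠] (0 : ℂ)) := by
    rw [tendsto_nhdsWithin_iff]
    constructor
    · have : Tendsto (fun n : ℕ => ρ / 2 / (n + 2 : ℝ)) atTop (𝓝 0) := by
        apply Tendsto.div_atTop (tendsto_const_nhds)
        exact tendsto_atTop_add_const_right _ 2 tendsto_natCast_atTop_atTop
      have := (Complex.continuous_ofReal.tendsto 0).comp this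
      simpa [hw, Function.comp_def] using this
    · filter_upwards with n
      simp only [hw, mem_compl_iff, mem_singleton_iff, Complex.ofReal_eq_zero]
      exact ne_of_gt (hwpos n)
  have hAan : AnalyticOnNhd ℂ A (ball 0 ρ) := hdA.analyticOnNhd hball
  have hBan : AnalyticOnNhd ℂ B (ball 0 ρ) := hdB.analyticOnNhd hball
  have hCan : AnalyticOnNhd ℂ C (ball 0 ρ) := hdC.analyticOnNhd hball
  have hAan' : AnalyticOnNhd ℂ A' (ball 0 ρ) := hdA'.analyticOnNhd hball
  have hBan' : AnalyticOnNhd ℂ B' (ball 0 ρ) := hdB'.analyticOnNhd hball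
  have hCan' : AnalyticOnNhd ℂ C' (ball 0 ρ) := hdC'.analyticOnNhd hball
  have hpre : IsPreconnected (ball (0 : ℂ) ρ) := (convex_ball (0 : ℂ) ρ).isPreconnected
  have h0mem : (0 : ℂ) ∈ ball (0 : ℂ) ρ := mem_ball_self hρ
  have hfreq : ∀ {u v : ℂ → ℂ}, (∀ n : ℕ, u (w n) = v (w n)) → (∃ᶠ z in 𝓝[≠] (0 : ℂ), u z = v z) :=
    fun huv => hwtend.frequently (Filter.Eventually.frequently (Filter.Eventually.of_forall huv))
  have heqA : ∀ n : ℕ, A (w n) = A' (w n) := fun n =>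
    congrArg Prod.fst (heqon (hwmem n))
  have heqB : ∀ n : ℕ, B (w n) = B' (w n) := fun n =>
    congrArg (fun p : E3 => p.2.1) (heqon (hwmem n))
  have heqC : ∀ n : ℕ, C (w n) = C' (w n) := fun n =>
    congrArg (fun p : E3 => p.2.2) (heqon (hwmem n))
  exact ⟨hAan.eqOn_of_preconnected_of_frequently_eq hAan' hpre h0mem (hfreq heqA),
    hBan.eqOn_of_preconnected_of_frequently_eq hBan' hpre h0mem (hfreq heqB),
    hCan.eqOn_of_preconnected_of_frequently_eq hCan' hpre h0mem (hfreq heqC)⟩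

lemma conserved (c : ℂ) {ρ : ℝ} (hρ : 0 < ρ) {A B C : ℂ → ℂ}
    (h : ∀ u ∈ ball (0 : ℂ) ρ, HasDerivAt A (B u * C u) u ∧ HasDerivAt B (-(A u * C u)) u ∧
      HasDerivAt C (-c * A u * B u) u)
    (hA0 : A 0 = 0) (hB0 : B 0 = 1) (hC0 : C 0 = 1) :
    ∀ u ∈ ball (0 : ℂ) ρ, A u ^ 2 + B u ^ 2 = 1 ∧ C u ^ 2 + c * A u ^ 2 = 1 := by
  have h0mem : (0 : ℂ) ∈ ball (0 : ℂ) ρ := mem_ball_self hρ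
  have key : ∀ (G : ℂ → ℂ), (∀ u ∈ ball (0 : ℂ) ρ, HasDerivAt G 0 u) →
      ∀ u ∈ ball (0 : ℂ) ρ, G u = G 0 := by
    intro G hG u hu
    have hdiff : DifferentiableOn ℂ G (ball 0 ρ) :=
      fun v hv => ((hG v hv).differentiableAt).differentiableWithinAt
    have hzero : ∀ v ∈ ball (0 : ℂ) ρ, fderivWithin ℂ G (ball 0 ρ) v = 0 := by
      intro v hv
      rw [fderivWithin_of_isOpen isOpen_ball hv]
      have hF : HasFDerivAt G (0 : ℂ →L[ℂ] ℂ) v := by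
        have := (hG v hv).hasFDerivAt
        rw [ContinuousLinearMap.toSpanSingleton_zero] at this
        exact this
      exact hF.fderiv
    exact Convex.is_const_of_fderivWithin_eq_zero (convex_ball 0 ρ) hdiff hzero hu h0mem
  intro u hu
  constructor
  · have hG : ∀ v ∈ ball (0 : ℂ) ρ, HasDerivAt (fun z => A z ^ 2 + B z ^ 2) 0 v := by
      intro v hv
      have := (((h v hv).1.pow 2).add ((h v hv).2.1.pow 2))
      exact this.congr_deriv (by ring)
    have := key _ hG u hu
    simpa [hA0, hB0] using this
  · have hG : ∀ v ∈ ball (0 : ℂ) ρ, HasDerivAt (fun z => C z ^ 2 + c * A z ^ 2) 0 v := by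
      intro v hv
      have := (((h v hv).2.2.pow 2).add (((h v hv).1.pow 2).const_mul c))
      exact this.congr_deriv (by ring)
    have := key _ hG u hu
    simpa [hA0, hC0] using this


lemma tsum_hasFPowerSeriesAt {F : ℂ → ℂ} (hF : AnalyticAt ℂ F 0) (hF0 : F 0 ≠ 0) (a : ℕ → ℂ)
    (ha : ∀ᶠ u in 𝓝[≠] (0 : ℂ), F u = ∑' n : ℕ, a n * u ^ n) :
    HasFPowerSeriesAt F (ofScalars ℂ a) 0 := by
  have hFc : ContinuousAt F 0 := hF.continuousAt
  by_cases hsum : ∃ᶠ u in 𝓝[≠] (0 : ℂ), Summable (fun n : ℕ => a n * u ^ n)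
  · obtain ⟨u0, hu0s, hu0ne⟩ :=
      (hsum.and_eventually self_mem_nhdsWithin).exists
    have hu0 : u0 ≠ 0 := hu0ne
    -- positive radius
    have htends : Tendsto (fun n : ℕ => ‖ofScalars ℂ a n‖ * ‖u0‖ ^ n) atTop (𝓝 0) := by
      have h1 : Tendsto (fun n : ℕ => ‖a n * u0 ^ n‖) atTop (𝓝 0) := by
        simpa using (hu0s.tendsto_atTop_zero).norm
      apply h1.congr
      intro n
      rw [norm_mul, norm_pow, ofScalars_norm]
    have hrad : 0 < (ofScalars ℂ a).radius := by
      have hle : (‖u0‖₊ : ℝ≥0∞) ≤ (ofScalars ℂ a).radius :=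
        (ofScalars ℂ a).le_radius_of_tendsto htends
      exact lt_of_lt_of_le (by simpa using (nnnorm_pos.mpr hu0)) hle
    have hball := (ofScalars ℂ a).hasFPowerSeriesOnBall hrad
    have hat : HasFPowerSeriesAt ((ofScalars ℂ a).sum) (ofScalars ℂ a) 0 :=
      hball.hasFPowerSeriesAt
    have hsum_eq : ∀ u : ℂ, (ofScalars ℂ a).sum u = ∑' n : ℕ, a n * u ^ n := by
      intro u
      have := FormalMultilinearSeries.ofScalars_sum_eq a u
      simpa [FormalMultilinearSeries.ofScalarsSum, smul_eq_mul] using this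
    have heq' : F =ᶠ[𝓝[≠] (0 : ℂ)] (ofScalars ℂ a).sum :=
      ha.mono fun u hu => hu.trans (hsum_eq u).symm
    have h0 : F 0 = (ofScalars ℂ a).sum 0 := by
      have t1 : Tendsto F (𝓝[≠] (0 : ℂ)) (𝓝 (F 0)) := hFc.continuousWithinAt
      have t2 : Tendsto F (𝓝[≠] (0 : ℂ)) (𝓝 ((ofScalars ℂ a).sum 0)) :=
        (hat.continuousAt.continuousWithinAt).congr' heq'.symm
      exact tendsto_nhds_unique t1 t2
    have heq : F =ᶠ[𝓝 (0 : ℂ)] (ofScalars ℂ a).sum := by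
      rw [← nhdsNE_sup_pure (0 : ℂ)]
      rw [Filter.EventuallyEq, Filter.eventually_sup]
      exact ⟨heq', by simpa [Filter.eventually_pure] using h0⟩
    exact hat.congr heq.symm
  · exfalso
    rw [Filter.not_frequently] at hsum
    have hzero : F =ᶠ[𝓝[≠] (0 : ℂ)] fun _ => 0 := by
      filter_upwards [ha, hsum] with u h1 h2
      rw [h1, tsum_eq_zero_of_not_summable h2]
    have t1 : Tendsto F (𝓝[≠] (0 : ℂ)) (𝓝 (F 0)) := hFc.continuousWithinAt
    have t2 : Tendsto F (𝓝[≠] (0 : ℂ)) (𝓝 0) :=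
      (tendsto_const_nhds).congr' hzero.symm
    exact hF0 (tendsto_nhds_unique t1 t2)

lemma tsum_coeff_unique {F : ℂ → ℂ} (hF : AnalyticAt ℂ F 0) (hF0 : F 0 ≠ 0) (a b : ℕ → ℂ)
    (ha : ∀ᶠ u in 𝓝[≠] (0 : ℂ), F u = ∑' n : ℕ, a n * u ^ n)
    (hb : ∀ᶠ u in 𝓝[≠] (0 : ℂ), F u = ∑' n : ℕ, b n * u ^ n) : a = b :=
  ofScalars_series_injective ℂ ℂ
    ((tsum_hasFPowerSeriesAt hF hF0 a ha).eq_formalMultilinearSeries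
      (tsum_hasFPowerSeriesAt hF hF0 b hb))


lemma key_pointwise
    (sn cn dn : ℝ → ℂ → ℂ) (r : ℝ → ℝ) (q : ℕ → Polynomial ℚ)
    (hr : ∀ x ∈ Set.Ioo (0 : ℝ) 1, 0 < r x)
    (hode : ∀ x ∈ Set.Ioo (0 : ℝ) 1, ∀ u ∈ Metric.ball (0 : ℂ) (r x),
      HasDerivAt (sn x) (cn x u * dn x u) u ∧
      HasDerivAt (cn x) (-(sn x u * dn x u)) u ∧
      HasDerivAt (dn x) (-(x : ℂ) * sn x u * cn x u) u)
    (hinit : ∀ x ∈ Set.Ioo (0 : ℝ) 1, sn x 0 = 0 ∧ cn x 0 = 1 ∧ dn x 0 = 1)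
    (hser : ∀ x ∈ Set.Ioo (0 : ℝ) 1, ∀ u ∈ Metric.ball (0 : ℂ) (r x), u ≠ 0 →
      u * dn x u / sn x u = ∑' n : ℕ, Polynomial.aeval (x : ℂ) (q n) * u ^ n / n.factorial)
    {x : ℝ} (hx : x ∈ Set.Ioo (0 : ℝ) 1) (n : ℕ) :
    Polynomial.aeval (((1 - x : ℝ)) : ℂ) (q n) = I ^ n * Polynomial.aeval ((x : ℝ) : ℂ) (q n) := by
  obtain ⟨hx0, hx1⟩ := hx
  set y : ℝ := 1 - x with hydef
  have hy : y ∈ Set.Ioo (0 : ℝ) 1 := ⟨by simp [hydef]; linarith, by simp [hydef]; linarith⟩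
  have hx' : x ∈ Set.Ioo (0 : ℝ) 1 := ⟨hx0, hx1⟩
  have hrx := hr x hx'
  have hry := hr y hy
  obtain ⟨hsn0x, hcn0x, hdn0x⟩ := hinit x hx'
  obtain ⟨hsn0y, hcn0y, hdn0y⟩ := hinit y hy
  -- conserved quantities for parameter x
  have hconsx := conserved (x : ℂ) hrx (fun u hu => hode x hx' u hu) hsn0x hcn0x hdn0x
  -- analytic extension F of u ↦ u * dn y u / sn y u near 0
  have hdsny : DifferentiableOn ℂ (sn y) (ball 0 (r y)) :=
    fun u hu => ((hode y hy u hu).1.differentiableAt).differentiableWithinAt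
  have hddny : DifferentiableOn ℂ (dn y) (ball 0 (r y)) :=
    fun u hu => ((hode y hy u hu).2.2.differentiableAt).differentiableWithinAt
  have hsnany : AnalyticAt ℂ (sn y) 0 :=
    (hdsny.analyticOnNhd isOpen_ball) 0 (mem_ball_self hry)
  have hdnany : AnalyticAt ℂ (dn y) 0 :=
    (hddny.analyticOnNhd isOpen_ball) 0 (mem_ball_self hry)
  obtain ⟨p, hp⟩ := hsnany
  have hds : AnalyticAt ℂ (dslope (sn y) 0) 0 := hp.has_fpower_series_dslope_fslope.analyticAt
  have hderiv0 : deriv (sn y) 0 = 1 := by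
    rw [(hode y hy 0 (mem_ball_self hry)).1.deriv, hcn0y, hdn0y, one_mul]
  have hds0 : dslope (sn y) 0 0 = 1 := by rw [dslope_same]; exact hderiv0
  set F : ℂ → ℂ := fun u => dn y u / dslope (sn y) 0 u with hFdef
  have hFan : AnalyticAt ℂ F 0 := hdnany.div hds (by rw [hds0]; exact one_ne_zero)
  have hF0 : F 0 = 1 := by rw [hFdef]; simp [dslope_same, hderiv0, hdn0y]
  have hFev : ∀ᶠ u in 𝓝[≠] (0 : ℂ), F u = u * dn y u / sn y u := by
    filter_upwards [self_mem_nhdsWithin] with u hune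
    have hune' : u ≠ 0 := hune
    rw [hFdef]
    simp only
    rw [dslope_of_ne _ hune', slope_def_field, hsn0y, sub_zero, sub_zero,
      div_div_eq_mul_div, mul_comm (dn y u) u]
  -- punctured ball where cn x ≠ 0
  have hcncont : ContinuousAt (cn x) 0 :=
    (hode x hx' 0 (mem_ball_self hrx)).2.1.differentiableAt.continuousAt
  have hcne : ∀ᶠ u in 𝓝 (0 : ℂ), cn x u ≠ 0 ∧ u ∈ ball (0 : ℂ) (r x) := by
    apply Filter.Eventually.and
    · exact hcncont.eventually_ne (by rw [hcn0x]; exact one_ne_zero)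
    · exact Metric.ball_mem_nhds 0 hrx
  obtain ⟨ρ1, hρ1, hρ1h⟩ := Metric.eventually_nhds_iff_ball.mp hcne
  -- the transformed triple
  set Sj : ℂ → ℂ := fun u => -I * sn x (I * u) / cn x (I * u) with hSjdef
  set Cj : ℂ → ℂ := fun u => (cn x (I * u))⁻¹ with hCjdef
  set Dj : ℂ → ℂ := fun u => dn x (I * u) / cn x (I * u) with hDjdef
  have hmapball : ∀ {t : ℝ} {u : ℂ}, u ∈ ball (0 : ℂ) t → I * u ∈ ball (0 : ℂ) t := by
    intro t u hu
    rw [mem_ball_zero_iff] at hu ⊢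
    simpa using hu
  have hSCD : ∀ u ∈ ball (0 : ℂ) ρ1, HasDerivAt Sj (Cj u * Dj u) u ∧
      HasDerivAt Cj (-(Sj u * Dj u)) u ∧ HasDerivAt Dj (-((y : ℝ) : ℂ) * Sj u * Cj u) u := by
    intro u hu
    have hwball : I * u ∈ ball (0 : ℂ) ρ1 := hmapball hu
    obtain ⟨hcnw, hwrx⟩ := hρ1h (I * u) hwball
    obtain ⟨hid1, hid2⟩ := hconsx (I * u) hwrx
    obtain ⟨hsnw, hcnw', hdnw⟩ := hode x hx' (I * u) hwrx
    have hmulI : HasDerivAt (fun v : ℂ => I * v) I u := by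
      simpa using (hasDerivAt_id u).const_mul I
    have hsnI : HasDerivAt (fun v => sn x (I * v)) (cn x (I * u) * dn x (I * u) * I) u := by
      simpa [Function.comp_def] using hsnw.comp u hmulI
    have hcnI : HasDerivAt (fun v => cn x (I * v)) (-(sn x (I * u) * dn x (I * u)) * I) u := by
      simpa [Function.comp_def] using hcnw'.comp u hmulI
    have hdnI : HasDerivAt (fun v => dn x (I * v)) (-(x : ℂ) * sn x (I * u) * cn x (I * u) * I) u := by
      simpa [Function.comp_def] using hdnw.comp u hmulI
    refine ⟨?_, ?_, ?_⟩
    · have hnum : HasDerivAt (fun v => -I * sn x (I * v))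
        (-I * (cn x (I * u) * dn x (I * u) * I)) u := hsnI.const_mul (-I)
      have hS := hnum.div hcnI hcnw
      refine HasDerivAt.congr_deriv hS (Eq.symm ?_)
      rw [hCjdef, hDjdef]
      simp only
      field_simp
      linear_combination (dn x (I * u) * I ^ 2) * hid1 + dn x (I * u) * Complex.I_sq
    · have hC := hcnI.inv hcnw
      refine HasDerivAt.congr_deriv hC (Eq.symm ?_)
      rw [hSjdef, hDjdef]
      simp only
      field_simp
    · have hD := hdnI.div hcnI hcnw
      refine HasDerivAt.congr_deriv hD (Eq.symm ?_)
      rw [hSjdef, hCjdef]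
      simp only
      have hycast : ((y : ℝ) : ℂ) = 1 - (x : ℂ) := by rw [hydef]; push_cast; ring
      rw [hycast]
      field_simp
      linear_combination ((x : ℂ) * sn x (I * u)) * hid1 - sn x (I * u) * hid2
  have hSj0 : Sj 0 = 0 := by rw [hSjdef]; simp [hsn0x]
  have hCj0 : Cj 0 = 1 := by rw [hCjdef]; simp [hcn0x]
  have hDj0 : Dj 0 = 1 := by rw [hDjdef]; simp [hcn0x, hdn0x]
  set ρ2 : ℝ := min ρ1 (r y) with hρ2def
  have hρ2 : 0 < ρ2 := lt_min hρ1 hry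
  obtain ⟨eqS, eqC, eqD⟩ := ode_unique ((y : ℝ) : ℂ) hρ2
    (fun u hu => hode y hy u (ball_subset_ball (min_le_right _ _) hu))
    (fun u hu => hSCD u (ball_subset_ball (min_le_left _ _) hu))
    (by rw [hsn0y, hSj0]) (by rw [hcn0y, hCj0]) (by rw [hdn0y, hDj0])
  -- sn x ≠ 0 on a punctured neighborhood
  have hdsnx : DifferentiableOn ℂ (sn x) (ball 0 (r x)) :=
    fun u hu => ((hode x hx' u hu).1.differentiableAt).differentiableWithinAt
  have hsnanx : AnalyticAt ℂ (sn x) 0 :=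
    (hdsnx.analyticOnNhd isOpen_ball) 0 (mem_ball_self hrx)
  have hsnne : ∀ᶠ u in 𝓝[≠] (0 : ℂ), sn x u ≠ 0 := by
    rcases hsnanx.eventually_eq_zero_or_eventually_ne_zero with h | h
    · exfalso
      have h1 : deriv (sn x) 0 = 1 := by
        rw [(hode x hx' 0 (mem_ball_self hrx)).1.deriv, hcn0x, hdn0x, one_mul]
      have h2 : sn x =ᶠ[𝓝 (0 : ℂ)] fun _ => 0 := h
      rw [h2.deriv_eq, deriv_const] at h1
      exact one_ne_zero h1.symm
    · exact h
  have hItend : Tendsto (fun u : ℂ => I * u) (𝓝[≠] (0 : ℂ)) (𝓝[≠] (0 : ℂ)) := by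
    rw [tendsto_nhdsWithin_iff]
    constructor
    · have : Tendsto (fun u : ℂ => I * u) (𝓝 0) (𝓝 (I * 0)) :=
        (continuous_const.mul continuous_id).tendsto 0
      simpa using this.mono_left nhdsWithin_le_nhds
    · filter_upwards [self_mem_nhdsWithin] with u hu
      have : u ≠ 0 := hu
      simp only [mem_compl_iff, mem_singleton_iff]
      exact mul_ne_zero I_ne_zero this
  have hsnIne : ∀ᶠ u in 𝓝[≠] (0 : ℂ), sn x (I * u) ≠ 0 := hItend.eventually hsnne
  -- the two series representations
  set a : ℕ → ℂ := fun m => Polynomial.aeval ((y : ℝ) : ℂ) (q m) / m.factorial with hadef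
  set b : ℕ → ℂ := fun m => Polynomial.aeval ((x : ℝ) : ℂ) (q m) * I ^ m / m.factorial with hbdef
  have ha : ∀ᶠ u in 𝓝[≠] (0 : ℂ), F u = ∑' m : ℕ, a m * u ^ m := by
    filter_upwards [hFev, eventually_nhdsWithin_of_eventually_nhds (Metric.ball_mem_nhds (0:ℂ) hry),
      self_mem_nhdsWithin] with u hFu hub hune
    rw [hFu, hser y hy u hub hune]
    apply tsum_congr
    intro m
    rw [hadef]
    simp only
    rw [div_mul_eq_mul_div]
  have hb : ∀ᶠ u in 𝓝[≠] (0 : ℂ), F u = ∑' m : ℕ, b m * u ^ m := by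
    filter_upwards [hFev, self_mem_nhdsWithin, hsnIne,
      eventually_nhdsWithin_of_eventually_nhds (Metric.ball_mem_nhds (0:ℂ) hρ2)] with u hFu hune hsnw hub
    have hune' : u ≠ 0 := hune
    have hwball : I * u ∈ ball (0 : ℂ) ρ1 :=
      hmapball (ball_subset_ball (min_le_left _ _) hub)
    obtain ⟨hcnw, hwrx⟩ := hρ1h (I * u) hwball
    have hwne : I * u ≠ 0 := mul_ne_zero I_ne_zero hune'
    rw [hFu, eqD hub, eqS hub]
    have hstep : u * Dj u / Sj u = (I * u) * dn x (I * u) / sn x (I * u) := by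
      rw [hSjdef, hDjdef]
      simp only
      field_simp
      rw [mul_comm u I, Complex.I_sq]
      field_simp
    rw [hstep, hser x hx' (I * u) hwrx hwne]
    apply tsum_congr
    intro m
    rw [hbdef]
    simp only
    rw [mul_pow]
    ring
  have hab : a = b := tsum_coeff_unique hFan (by rw [hF0]; exact one_ne_zero) a b ha hb
  have hn := congrFun hab n
  rw [hadef, hbdef] at hn
  simp only at hn
  have hfac : ((n.factorial : ℂ)) ≠ 0 := Nat.cast_ne_zero.mpr n.factorial_ne_zero
  rw [div_eq_div_iff hfac hfac] at hn
  have := mul_right_cancel₀ hfac hn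
  rw [this]
  push_cast
  ring


lemma poly_eq_zero (P : Polynomial ℚ)
    (h : ∀ x : ℝ, x ∈ Set.Ioo (0 : ℝ) 1 → Polynomial.aeval ((x : ℝ) : ℂ) P = 0) : P = 0 := by
  have hmap : P.map (algebraMap ℚ ℂ) = 0 := by
    apply Polynomial.eq_zero_of_infinite_isRoot
    have himg : ((fun t : ℝ => (t : ℂ)) '' (Set.Ioo 0 1)).Infinite :=
      Set.Infinite.image Complex.ofReal_injective.injOn (Set.Ioo_infinite (by norm_num))
    apply himg.mono
    rintro z ⟨t, ht, rfl⟩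
    show Polynomial.IsRoot _ _
    rw [Polynomial.IsRoot, Polynomial.eval_map, ← Polynomial.aeval_def]
    exact h t ht
  exact (Polynomial.map_eq_zero_iff (algebraMap ℚ ℂ).injective).mp hmap

end JacobiQAux

open JacobiQAux in
/-- Symmetries of the Maclaurin coefficients `q_n(x)` of `u·ds(u,k)` (with `x = k²`),
where `ds = dn/sn` and `sn, cn, dn` solve the defining ODE system of the Jacobi elliptic
functions with `k² = x`, and the polynomials `q n ∈ ℚ[X]` give the Maclaurin expansion
`u·ds(u) = Σ q_n(x) uⁿ/n!` on a punctured ball. Then `q_{2s+1} = 0`,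
`q_{4s}(1-x) = q_{4s}(x)` and `q_{4s+2}(1-x) = -q_{4s+2}(x)`. -/
theorem u_ds_maclaurin_coefficients_symmetry
    (sn cn dn : ℝ → ℂ → ℂ) (r : ℝ → ℝ) (q : ℕ → Polynomial ℚ)
    (hr : ∀ x ∈ Set.Ioo (0 : ℝ) 1, 0 < r x)
    (hode : ∀ x ∈ Set.Ioo (0 : ℝ) 1, ∀ u ∈ Metric.ball (0 : ℂ) (r x),
      HasDerivAt (sn x) (cn x u * dn x u) u ∧
      HasDerivAt (cn x) (-(sn x u * dn x u)) u ∧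
      HasDerivAt (dn x) (-(x : ℂ) * sn x u * cn x u) u)
    (hinit : ∀ x ∈ Set.Ioo (0 : ℝ) 1, sn x 0 = 0 ∧ cn x 0 = 1 ∧ dn x 0 = 1)
    (hser : ∀ x ∈ Set.Ioo (0 : ℝ) 1, ∀ u ∈ Metric.ball (0 : ℂ) (r x), u ≠ 0 →
      u * dn x u / sn x u = ∑' n : ℕ, Polynomial.aeval (x : ℂ) (q n) * u ^ n / n.factorial) :
    ∀ s : ℕ, q (2 * s + 1) = 0 ∧
      (q (4 * s)).comp (1 - Polynomial.X) = q (4 * s) ∧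
      (q (4 * s + 2)).comp (1 - Polynomial.X) = -(q (4 * s + 2)) := by
  have key : ∀ {x : ℝ}, x ∈ Set.Ioo (0 : ℝ) 1 → ∀ n : ℕ,
      Polynomial.aeval (((1 - x : ℝ)) : ℂ) (q n) = I ^ n * Polynomial.aeval ((x : ℝ) : ℂ) (q n) :=
    fun hx n => key_pointwise sn cn dn r q hr hode hinit hser hx n
  have keyc : ∀ {x : ℝ}, x ∈ Set.Ioo (0 : ℝ) 1 → ∀ n : ℕ,
      Polynomial.aeval (1 - (x : ℂ)) (q n) = I ^ n * Polynomial.aeval ((x : ℝ) : ℂ) (q n) := by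
    intro x hx n
    have := key hx n
    rwa [show (((1 - x : ℝ)) : ℂ) = 1 - (x : ℂ) by push_cast; ring] at this
  intro s
  refine ⟨?_, ?_, ?_⟩
  · apply poly_eq_zero
    intro x hx
    have hx' : (1 - x) ∈ Set.Ioo (0 : ℝ) 1 := ⟨by linarith [hx.2], by linarith [hx.1]⟩
    have h1 := keyc hx (2 * s + 1)
    have h2 := keyc hx' (2 * s + 1)
    rw [show (1 - ((1 - x : ℝ) : ℂ)) = ((x : ℝ) : ℂ) by push_cast; ring] at h2
    rw [show (((1 - x : ℝ)) : ℂ) = 1 - (x : ℂ) by push_cast; ring, h1] at h2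
    have hI : (I : ℂ) ^ (2 * s + 1) * I ^ (2 * s + 1) = -1 := by
      rw [← pow_add, show (2 * s + 1) + (2 * s + 1) = 2 * (2 * s + 1) by ring, pow_mul,
        Complex.I_sq]
      exact Odd.neg_one_pow (odd_two_mul_add_one s)
    rw [← mul_assoc, hI] at h2
    linear_combination h2 / 2
  · rw [← sub_eq_zero]
    apply poly_eq_zero
    intro x hx
    rw [map_sub, Polynomial.aeval_comp, map_sub, map_one, Polynomial.aeval_X]
    rw [keyc hx (4 * s)]
    rw [show (I : ℂ) ^ (4 * s) = 1 by rw [pow_mul, Complex.I_pow_four, one_pow]]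
    ring
  · rw [← sub_eq_zero]
    apply poly_eq_zero
    intro x hx
    rw [map_sub, Polynomial.aeval_comp, map_sub, map_one, Polynomial.aeval_X, map_neg]
    rw [keyc hx (4 * s + 2)]
    rw [show (I : ℂ) ^ (4 * s + 2) = -1 by
      rw [pow_add, pow_mul, Complex.I_pow_four, one_pow, Complex.I_sq, one_mul]]
    ring
end
end

section
/- For all integers m ≥ 1 and k ≥ 0, there exist rational numbers b_0, ..., b_k (depending only on k) such that Σ_{n=1}^∞ (-1)^{n-1} n^{2(m+k)-1} / sinh^{2k+1}(n y) = Σ_{j=0}^{k} b_j · (d^{2j}/dy^{2j}) [Σ_{n=1}^∞ (-1)^{n-1} n^{2(m+k-j)-1} / sinh(n y)], for all y > 0. -/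
open Real

namespace BarS

noncomputable def φ (l : ℕ) (x : ℝ) : ℝ := ((Real.sinh x)⁻¹) ^ (2*l+1)
noncomputable def ψ (l : ℕ) (x : ℝ) : ℝ := Real.cosh x * ((Real.sinh x)⁻¹) ^ (2*l+2)

lemma hasDerivAt_inv_sinh {x : ℝ} (hx : x ≠ 0) :
    HasDerivAt (fun x => (Real.sinh x)⁻¹) (-(Real.cosh x) * ((Real.sinh x)⁻¹)^2) x := by
  have hs : Real.sinh x ≠ 0 := Real.sinh_ne_zero.mpr hx
  have := (Real.hasDerivAt_sinh x).fun_inv hs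
  refine this.congr_deriv (Eq.symm ?_)
  field_simp

lemma hasDerivAt_φ (l : ℕ) {x : ℝ} (hx : x ≠ 0) :
    HasDerivAt (φ l) (-(2*l+1 : ℝ) * ψ l x) x := by
  have hs : Real.sinh x ≠ 0 := Real.sinh_ne_zero.mpr hx
  have := (hasDerivAt_inv_sinh hx).fun_pow (2*l+1)
  refine this.congr_deriv (Eq.symm ?_)
  simp [ψ]
  ring

lemma hasDerivAt_ψ (l : ℕ) {x : ℝ} (hx : x ≠ 0) :
    HasDerivAt (ψ l) (-(2*l+1 : ℝ) * φ l x - (2*l+2 : ℝ) * φ (l+1) x) x := by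
  have hs : Real.sinh x ≠ 0 := Real.sinh_ne_zero.mpr hx
  have H := (Real.hasDerivAt_cosh x).fun_mul ((hasDerivAt_inv_sinh hx).fun_pow (2*l+2))
  refine H.congr_deriv (Eq.symm ?_)
  have hc : Real.cosh x ^ 2 = Real.sinh x ^ 2 + 1 := Real.cosh_sq x
  have h1 : Real.sinh x * (Real.sinh x)⁻¹ ^ (2*l+2) = (Real.sinh x)⁻¹ ^ (2*l+1) := by
    rw [pow_succ', ← mul_assoc, mul_inv_cancel₀ hs, one_mul]
  have h2 : Real.sinh x ^ 2 * (Real.sinh x)⁻¹ ^ (2*l+3) = (Real.sinh x)⁻¹ ^ (2*l+1) := by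
    have : (2*l+3) = (2*l+1) + 2 := by ring
    rw [this, pow_add, ← mul_assoc, mul_comm (Real.sinh x ^2), mul_assoc,
      ← mul_pow, mul_inv_cancel₀ hs, one_pow, mul_one]
  simp only [φ, Nat.add_sub_cancel]
  push_cast
  linear_combination ((2*(l:ℝ)+2) * ((Real.sinh x)⁻¹)^(2*l+3)) * hc + (-1 : ℝ) * h1 + (2*(l:ℝ)+2) * h2

lemma sinh_lower {a x : ℝ} (hx : a ≤ x) :
    (1 - Real.exp (-(2*a)))/2 * Real.exp x ≤ Real.sinh x := by
  rw [Real.sinh_eq]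
  have h1 : Real.exp (-x) ≤ Real.exp x * Real.exp (-(2*a)) := by
    rw [← Real.exp_add]
    exact Real.exp_le_exp.mpr (by linarith)
  nlinarith [Real.exp_pos x]

noncomputable def Kc (a : ℝ) : ℝ := 2/(1 - Real.exp (-(2*a)))

lemma Kc_pos {a : ℝ} (ha : 0 < a) : 0 < Kc a := by
  have he : Real.exp (-(2*a)) < 1 := by rw [Real.exp_lt_one_iff]; linarith
  have hd : 0 < 1 - Real.exp (-(2*a)) := by linarith
  unfold Kc; positivity

lemma inv_sinh_le {a x : ℝ} (ha : 0 < a) (hx : a ≤ x) :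
    (Real.sinh x)⁻¹ ≤ Kc a * Real.exp (-x) := by
  have he : Real.exp (-(2*a)) < 1 := by rw [Real.exp_lt_one_iff]; linarith
  have hd : 0 < 1 - Real.exp (-(2*a)) := by linarith
  have h0 : 0 < (1 - Real.exp (-(2*a)))/2 * Real.exp x := by positivity
  calc (Real.sinh x)⁻¹ ≤ ((1 - Real.exp (-(2*a)))/2 * Real.exp x)⁻¹ :=
        inv_anti₀ h0 (sinh_lower hx)
    _ = Kc a * Real.exp (-x) := by
        unfold Kc
        simp only [Real.exp_neg]
        field_simp
    

lemma Kc_one_le {a : ℝ} (ha : 0 < a) : 1 ≤ Kc a := by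
  have he : Real.exp (-(2*a)) < 1 := by rw [Real.exp_lt_one_iff]; linarith
  have he0 := Real.exp_pos (-(2*a))
  rw [Kc, le_div_iff₀ (by linarith)]; linarith

lemma exp_pow_le {x : ℝ} (hx : 0 < x) (n : ℕ) (hn : 1 ≤ n) :
    Real.exp (-x) ^ n ≤ Real.exp (-x) := by
  apply pow_le_of_le_one (by positivity) (by rw [Real.exp_le_one_iff]; linarith) (by omega)

lemma φ_bound {a x : ℝ} (ha : 0 < a) (hx : a ≤ x) (l : ℕ) :
    |φ l x| ≤ Kc a ^ (2*l+2) * Real.exp (-x) := by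
  have hsx : 0 < Real.sinh x := Real.sinh_pos_iff.mpr (lt_of_lt_of_le ha hx)
  have hK := Kc_pos ha
  have hub : (Real.sinh x)⁻¹ ^ (2*l+1) ≤ (Kc a * Real.exp (-x)) ^ (2*l+1) :=
    pow_le_pow_left₀ (by positivity) (inv_sinh_le ha hx) _
  rw [abs_of_nonneg (by unfold φ; positivity)]
  calc φ l x ≤ (Kc a * Real.exp (-x)) ^ (2*l+1) := hub
    _ = Kc a ^ (2*l+1) * Real.exp (-x) ^ (2*l+1) := mul_pow _ _ _
    _ ≤ Kc a ^ (2*l+1) * Real.exp (-x) :=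
        mul_le_mul_of_nonneg_left (exp_pow_le (lt_of_lt_of_le ha hx) _ (by omega)) (by positivity)
    _ ≤ Kc a ^ (2*l+2) * Real.exp (-x) := by
        apply mul_le_mul_of_nonneg_right _ (by positivity)
        exact pow_le_pow_right₀ (Kc_one_le ha) (by omega)

lemma ψ_bound {a x : ℝ} (ha : 0 < a) (hx : a ≤ x) (l : ℕ) :
    |ψ l x| ≤ Kc a ^ (2*l+2) * Real.exp (-x) := by
  have hx0 : 0 < x := lt_of_lt_of_le ha hx
  have hsx : 0 < Real.sinh x := Real.sinh_pos_iff.mpr hx0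
  have hK := Kc_pos ha
  have hc : Real.cosh x ≤ Real.exp x := by
    rw [Real.cosh_eq]
    have h2 : Real.exp (-x) ≤ Real.exp x := Real.exp_le_exp.mpr (by linarith)
    linarith
  have hc0 : 0 < Real.cosh x := Real.cosh_pos x
  have hub : (Real.sinh x)⁻¹ ^ (2*l+2) ≤ (Kc a * Real.exp (-x)) ^ (2*l+2) :=
    pow_le_pow_left₀ (by positivity) (inv_sinh_le ha hx) _
  rw [abs_of_nonneg (by unfold ψ; positivity)]
  calc ψ l x ≤ Real.exp x * (Kc a * Real.exp (-x)) ^ (2*l+2) :=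
        mul_le_mul hc hub (by positivity) (by positivity)
    _ = Kc a ^ (2*l+2) * (Real.exp x * Real.exp (-x) * Real.exp (-x) ^ (2*l+1)) := by
        rw [mul_pow]; ring
    _ = Kc a ^ (2*l+2) * Real.exp (-x) ^ (2*l+1) := by
        rw [← Real.exp_add]; simp
    _ ≤ Kc a ^ (2*l+2) * Real.exp (-x) :=
        mul_le_mul_of_nonneg_left (exp_pow_le hx0 _ (by omega)) (by positivity)

noncomputable def G (p l : ℕ) (t : ℝ) : ℝ :=
  ∑' n : ℕ, (-1:ℝ)^n * ((n:ℝ)+1)^p * φ l (((n:ℝ)+1)*t)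
noncomputable def Gψ (p l : ℕ) (t : ℝ) : ℝ :=
  ∑' n : ℕ, (-1:ℝ)^n * ((n:ℝ)+1)^p * ψ l (((n:ℝ)+1)*t)

lemma summable_geom (p : ℕ) {a : ℝ} (ha : 0 < a) :
    Summable (fun n : ℕ => ((n:ℝ)+1)^p * Real.exp (-(((n:ℝ)+1)*a))) := by
  have hr : ‖Real.exp (-a)‖ < 1 := by
    rw [Real.norm_eq_abs, abs_of_pos (Real.exp_pos _), Real.exp_lt_one_iff]; linarith
  have h := (summable_pow_mul_geometric_of_norm_lt_one p hr).comp_injective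
    (Nat.succ_injective)
  apply h.congr
  intro n
  simp only [Function.comp_apply, Nat.succ_eq_add_one]
  push_cast
  rw [← Real.exp_nat_mul]
  push_cast
  ring_nf

lemma bound_summable (p l : ℕ) {a : ℝ} (ha : 0 < a) (C : ℝ) :
    Summable (fun n : ℕ => C * (((n:ℝ)+1)^p * Real.exp (-(((n:ℝ)+1)*a)))) :=
  (summable_geom p ha).mul_left C

lemma term_arg_le {a t : ℝ} (ha : 0 < a) (ht : a ≤ t) (n : ℕ) : a ≤ ((n:ℝ)+1)*t := by
  nlinarith [Nat.cast_nonneg (α := ℝ) n]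

lemma summable_φ_term (p l : ℕ) {t : ℝ} (ht : 0 < t) :
    Summable (fun n : ℕ => (-1:ℝ)^n * ((n:ℝ)+1)^p * φ l (((n:ℝ)+1)*t)) := by
  apply Summable.of_norm_bounded (bound_summable p l ht (Kc t ^ (2*l+2)))
  intro n
  have hb := φ_bound ht (term_arg_le ht le_rfl n) l
  rw [Real.norm_eq_abs, abs_mul, abs_mul]
  have h1 : |(-1:ℝ)^n| = 1 := by simp
  have h2 : |((n:ℝ)+1)^p| = ((n:ℝ)+1)^p := abs_of_nonneg (by positivity)
  rw [h1, h2, one_mul]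
  calc ((n:ℝ)+1)^p * |φ l (((n:ℝ)+1)*t)|
      ≤ ((n:ℝ)+1)^p * (Kc t ^ (2*l+2) * Real.exp (-(((n:ℝ)+1)*t))) :=
        mul_le_mul_of_nonneg_left hb (by positivity)
    _ = Kc t ^ (2*l+2) * (((n:ℝ)+1)^p * Real.exp (-(((n:ℝ)+1)*t))) := by ring

lemma summable_ψ_term (p l : ℕ) {t : ℝ} (ht : 0 < t) :
    Summable (fun n : ℕ => (-1:ℝ)^n * ((n:ℝ)+1)^p * ψ l (((n:ℝ)+1)*t)) := by
  apply Summable.of_norm_bounded (bound_summable p l ht (Kc t ^ (2*l+2)))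
  intro n
  have hb := ψ_bound ht (term_arg_le ht le_rfl n) l
  rw [Real.norm_eq_abs, abs_mul, abs_mul]
  have h1 : |(-1:ℝ)^n| = 1 := by simp
  have h2 : |((n:ℝ)+1)^p| = ((n:ℝ)+1)^p := abs_of_nonneg (by positivity)
  rw [h1, h2, one_mul]
  calc ((n:ℝ)+1)^p * |ψ l (((n:ℝ)+1)*t)|
      ≤ ((n:ℝ)+1)^p * (Kc t ^ (2*l+2) * Real.exp (-(((n:ℝ)+1)*t))) :=
        mul_le_mul_of_nonneg_left hb (by positivity)
    _ = Kc t ^ (2*l+2) * (((n:ℝ)+1)^p * Real.exp (-(((n:ℝ)+1)*t))) := by ring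

lemma hasDerivAt_term_φ (p l : ℕ) (n : ℕ) {t : ℝ} (ht : t ≠ 0) :
    HasDerivAt (fun t => (-1:ℝ)^n * ((n:ℝ)+1)^p * φ l (((n:ℝ)+1)*t))
      ((-1:ℝ)^n * ((n:ℝ)+1)^(p+1) * (-(2*l+1 : ℝ)) * ψ l (((n:ℝ)+1)*t)) t := by
  have hne : ((n:ℝ)+1)*t ≠ 0 := by
    apply mul_ne_zero _ ht
    positivity
  have hlin : HasDerivAt (fun t : ℝ => ((n:ℝ)+1)*t) ((n:ℝ)+1) t := by
    simpa using (hasDerivAt_id t).const_mul ((n:ℝ)+1)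
  have h := (hasDerivAt_φ l hne).comp t hlin
  have h2 := h.const_mul ((-1:ℝ)^n * ((n:ℝ)+1)^p)
  refine h2.congr_deriv (Eq.symm ?_)
  simp [Function.comp]
  ring

lemma hasDerivAt_term_ψ (p l : ℕ) (n : ℕ) {t : ℝ} (ht : t ≠ 0) :
    HasDerivAt (fun t => (-1:ℝ)^n * ((n:ℝ)+1)^p * ψ l (((n:ℝ)+1)*t))
      ((-1:ℝ)^n * ((n:ℝ)+1)^(p+1) *
        (-(2*l+1 : ℝ) * φ l (((n:ℝ)+1)*t) - (2*l+2 : ℝ) * φ (l+1) (((n:ℝ)+1)*t))) t := by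
  have hne : ((n:ℝ)+1)*t ≠ 0 := by
    apply mul_ne_zero _ ht
    positivity
  have hlin : HasDerivAt (fun t : ℝ => ((n:ℝ)+1)*t) ((n:ℝ)+1) t := by
    simpa using (hasDerivAt_id t).const_mul ((n:ℝ)+1)
  have h := ((hasDerivAt_ψ l hne).comp t hlin).const_mul ((-1:ℝ)^n * ((n:ℝ)+1)^p)
  refine h.congr_deriv (Eq.symm ?_)
  simp [Function.comp]
  ring

lemma hasDerivAt_G (p l : ℕ) {y : ℝ} (hy : 0 < y) :
    HasDerivAt (G p l) (-(2*l+1 : ℝ) * Gψ (p+1) l y) y := by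
  have ha : 0 < y/2 := by linarith
  have hmem : y ∈ Set.Ioi (y/2) := by simp; linarith
  have hKp := Kc_pos ha
  have h := hasDerivAt_tsum_of_isPreconnected
    (u := fun n : ℕ => ((2*l+1 : ℝ) * Kc (y/2) ^ (2*l+2)) * (((n:ℝ)+1)^(p+1) * Real.exp (-(((n:ℝ)+1)*(y/2)))))
    (g := fun n t => (-1:ℝ)^n * ((n:ℝ)+1)^p * φ l (((n:ℝ)+1)*t))
    (g' := fun n t => (-1:ℝ)^n * ((n:ℝ)+1)^(p+1) * (-(2*l+1 : ℝ)) * ψ l (((n:ℝ)+1)*t))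
    (bound_summable (p+1) l ha _) isOpen_Ioi (convex_Ioi _).isPreconnected
    (fun n t htm => hasDerivAt_term_φ p l n (by rw [Set.mem_Ioi] at htm; linarith))
    (fun n t htm => by
      rw [Set.mem_Ioi] at htm
      have hb := ψ_bound ha (term_arg_le ha htm.le n) l
      have hmono : Real.exp (-(((n:ℝ)+1)*t)) ≤ Real.exp (-(((n:ℝ)+1)*(y/2))) := by
        apply Real.exp_le_exp.mpr
        nlinarith [Nat.cast_nonneg (α := ℝ) n]
      rw [Real.norm_eq_abs, abs_mul, abs_mul, abs_mul]
      have h1 : |(-1:ℝ)^n| = 1 := by simp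
      have h2 : |((n:ℝ)+1)^(p+1)| = ((n:ℝ)+1)^(p+1) := abs_of_nonneg (by positivity)
      have h3 : |(-(2*l+1 : ℝ))| = (2*l+1 : ℝ) := by
        rw [abs_neg, abs_of_nonneg (by positivity : (0:ℝ) ≤ 2*(l:ℝ)+1)]
      rw [h1, h2, h3, one_mul]
      calc ((n:ℝ)+1)^(p+1) * (2*l+1 : ℝ) * |ψ l (((n:ℝ)+1)*t)|
          ≤ ((n:ℝ)+1)^(p+1) * (2*l+1 : ℝ) * (Kc (y/2) ^ (2*l+2) * Real.exp (-(((n:ℝ)+1)*t))) :=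
            mul_le_mul_of_nonneg_left hb (by positivity)
        _ ≤ ((n:ℝ)+1)^(p+1) * (2*l+1 : ℝ) * (Kc (y/2) ^ (2*l+2) * Real.exp (-(((n:ℝ)+1)*(y/2)))) := by
            apply mul_le_mul_of_nonneg_left _ (by positivity)
            exact mul_le_mul_of_nonneg_left hmono (by positivity)
        _ = ((2*l+1 : ℝ) * Kc (y/2) ^ (2*l+2)) * (((n:ℝ)+1)^(p+1) * Real.exp (-(((n:ℝ)+1)*(y/2)))) := by
            ring)
    hmem (summable_φ_term p l hy) hmem
  have : (∑' n : ℕ, (-1:ℝ)^n * ((n:ℝ)+1)^(p+1) * (-(2*l+1 : ℝ)) * ψ l (((n:ℝ)+1)*y))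
      = -(2*l+1 : ℝ) * Gψ (p+1) l y := by
    rw [Gψ, ← tsum_mul_left]
    exact tsum_congr fun n => by ring
  rw [← this]
  exact h

lemma hasDerivAt_Gψ (p l : ℕ) {y : ℝ} (hy : 0 < y) :
    HasDerivAt (Gψ p l) (-(2*l+1 : ℝ) * G (p+1) l y - (2*l+2 : ℝ) * G (p+1) (l+1) y) y := by
  have ha : 0 < y/2 := by linarith
  have hmem : y ∈ Set.Ioi (y/2) := by simp; linarith
  have hK1 := Kc_one_le ha
  have hKp := Kc_pos ha
  have h := hasDerivAt_tsum_of_isPreconnected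
    (u := fun n : ℕ => ((4*l+4 : ℝ) * Kc (y/2) ^ (2*l+4)) * (((n:ℝ)+1)^(p+1) * Real.exp (-(((n:ℝ)+1)*(y/2)))))
    (g := fun n t => (-1:ℝ)^n * ((n:ℝ)+1)^p * ψ l (((n:ℝ)+1)*t))
    (g' := fun n t => (-1:ℝ)^n * ((n:ℝ)+1)^(p+1) *
        (-(2*l+1 : ℝ) * φ l (((n:ℝ)+1)*t) - (2*l+2 : ℝ) * φ (l+1) (((n:ℝ)+1)*t)))
    (bound_summable (p+1) l ha _) isOpen_Ioi (convex_Ioi _).isPreconnected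
    (fun n t htm => hasDerivAt_term_ψ p l n (by rw [Set.mem_Ioi] at htm; linarith))
    (fun n t htm => by
      rw [Set.mem_Ioi] at htm
      have hb1 := φ_bound ha (term_arg_le ha htm.le n) l
      have hb2 := φ_bound ha (term_arg_le ha htm.le n) (l+1)
      have hmono : Real.exp (-(((n:ℝ)+1)*t)) ≤ Real.exp (-(((n:ℝ)+1)*(y/2))) := by
        apply Real.exp_le_exp.mpr
        nlinarith [Nat.cast_nonneg (α := ℝ) n]
      have hKle : Kc (y/2) ^ (2*l+2) ≤ Kc (y/2) ^ (2*l+4) := pow_le_pow_right₀ hK1 (by omega)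
      have hKle2 : Kc (y/2) ^ (2*(l+1)+2) ≤ Kc (y/2) ^ (2*l+4) := pow_le_pow_right₀ hK1 (by omega)
      rw [Real.norm_eq_abs, abs_mul, abs_mul]
      have h1 : |(-1:ℝ)^n| = 1 := by simp
      have h2 : |((n:ℝ)+1)^(p+1)| = ((n:ℝ)+1)^(p+1) := abs_of_nonneg (by positivity)
      rw [h1, h2, one_mul]
      have hsub : |(-(2*l+1 : ℝ) * φ l (((n:ℝ)+1)*t) - (2*l+2 : ℝ) * φ (l+1) (((n:ℝ)+1)*t))|
          ≤ (4*l+4 : ℝ) * Kc (y/2) ^ (2*l+4) * Real.exp (-(((n:ℝ)+1)*t)) := by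
        calc |(-(2*l+1 : ℝ) * φ l (((n:ℝ)+1)*t) - (2*l+2 : ℝ) * φ (l+1) (((n:ℝ)+1)*t))|
            ≤ |(-(2*l+1 : ℝ) * φ l (((n:ℝ)+1)*t))| + |((2*l+2 : ℝ) * φ (l+1) (((n:ℝ)+1)*t))| :=
              abs_sub _ _
          _ = (2*l+1 : ℝ) * |φ l (((n:ℝ)+1)*t)| + (2*l+2 : ℝ) * |φ (l+1) (((n:ℝ)+1)*t)| := by
              rw [abs_mul, abs_mul, abs_neg, abs_of_nonneg (a := (2*(l:ℝ)+1)) (by positivity),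
                abs_of_nonneg (a := (2*(l:ℝ)+2)) (by positivity)]
          _ ≤ (2*l+1 : ℝ) * (Kc (y/2) ^ (2*l+4) * Real.exp (-(((n:ℝ)+1)*t)))
              + (2*l+2 : ℝ) * (Kc (y/2) ^ (2*l+4) * Real.exp (-(((n:ℝ)+1)*t))) := by
              apply add_le_add
              · apply mul_le_mul_of_nonneg_left _ (by positivity)
                exact le_trans hb1 (mul_le_mul_of_nonneg_right hKle (by positivity))
              · apply mul_le_mul_of_nonneg_left _ (by positivity)
                exact le_trans hb2 (mul_le_mul_of_nonneg_right hKle2 (by positivity))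
          _ ≤ (4*l+4 : ℝ) * Kc (y/2) ^ (2*l+4) * Real.exp (-(((n:ℝ)+1)*t)) := by
              have : (0:ℝ) ≤ Kc (y/2) ^ (2*l+4) * Real.exp (-(((n:ℝ)+1)*t)) := by positivity
              nlinarith
      calc ((n:ℝ)+1)^(p+1) * |(-(2*l+1 : ℝ) * φ l (((n:ℝ)+1)*t) - (2*l+2 : ℝ) * φ (l+1) (((n:ℝ)+1)*t))|
          ≤ ((n:ℝ)+1)^(p+1) * ((4*l+4 : ℝ) * Kc (y/2) ^ (2*l+4) * Real.exp (-(((n:ℝ)+1)*t))) :=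
            mul_le_mul_of_nonneg_left hsub (by positivity)
        _ ≤ ((n:ℝ)+1)^(p+1) * ((4*l+4 : ℝ) * Kc (y/2) ^ (2*l+4) * Real.exp (-(((n:ℝ)+1)*(y/2)))) := by
            apply mul_le_mul_of_nonneg_left _ (by positivity)
            exact mul_le_mul_of_nonneg_left hmono (by positivity)
        _ = ((4*l+4 : ℝ) * Kc (y/2) ^ (2*l+4)) * (((n:ℝ)+1)^(p+1) * Real.exp (-(((n:ℝ)+1)*(y/2)))) := by
            ring)
    hmem (summable_ψ_term p l hy) hmem
  have heq : (∑' n : ℕ, (-1:ℝ)^n * ((n:ℝ)+1)^(p+1) *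
        (-(2*l+1 : ℝ) * φ l (((n:ℝ)+1)*y) - (2*l+2 : ℝ) * φ (l+1) (((n:ℝ)+1)*y)))
      = -(2*l+1 : ℝ) * G (p+1) l y - (2*l+2 : ℝ) * G (p+1) (l+1) y := by
    have s1 := (summable_φ_term (p+1) l hy).mul_left (-(2*l+1 : ℝ))
    have s2 := (summable_φ_term (p+1) (l+1) hy).mul_left (-(2*l+2 : ℝ))
    have : ∀ n : ℕ, (-1:ℝ)^n * ((n:ℝ)+1)^(p+1) *
        (-(2*l+1 : ℝ) * φ l (((n:ℝ)+1)*y) - (2*l+2 : ℝ) * φ (l+1) (((n:ℝ)+1)*y))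
        = -(2*l+1 : ℝ) * ((-1:ℝ)^n * ((n:ℝ)+1)^(p+1) * φ l (((n:ℝ)+1)*y))
          + -(2*l+2 : ℝ) * ((-1:ℝ)^n * ((n:ℝ)+1)^(p+1) * φ (l+1) (((n:ℝ)+1)*y)) := fun n => by ring
    rw [tsum_congr this, Summable.tsum_add s1 s2, tsum_mul_left, tsum_mul_left, G, G]
    ring
  rw [← heq]
  exact h

def c : ℕ → ℕ → ℚ
  | 0, 0 => 1
  | 0, _+1 => 0
  | j+1, 0 => c j 0
  | j+1, l+1 => (2*(l+1)+1)^2 * c j (l+1) + (2*l+1)*(2*l+2) * c j l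

lemma c_zero (j l : ℕ) (h : j < l) : c j l = 0 := by
  induction j generalizing l with
  | zero => cases l with
    | zero => omega
    | succ l => rfl
  | succ j ih =>
    cases l with
    | zero => omega
    | succ l =>
      rw [show c (j+1) (l+1) = (2*(l+1)+1)^2 * c j (l+1) + (2*l+1)*(2*l+2) * c j l from rfl,
        ih (l+1) (by omega), ih l (by omega)]
      ring

lemma c_diag_pos (j : ℕ) : 0 < c j j := by
  induction j with
  | zero => norm_num [c]
  | succ j ih =>
    rw [show c (j+1) (j+1) = (2*(j+1)+1)^2 * c j (j+1) + (2*j+1)*(2*j+2) * c j j from rfl,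
      c_zero j (j+1) (by omega)]
    have : (0:ℚ) < (2*(j:ℚ)+1)*(2*(j:ℚ)+2) := by positivity
    push_cast
    nlinarith

lemma iter_eq (p j : ℕ) : ∀ y : ℝ, 0 < y →
    iteratedDeriv (2*j) (G p 0) y
      = ∑ l ∈ Finset.range (j+1), (c j l : ℝ) * G (p + 2*j) l y := by
  induction j with
  | zero =>
    intro y hy
    simp [c]
  | succ j ih =>
    intro y hy
    set H : ℝ → ℝ := fun t => ∑ l ∈ Finset.range (j+1), (c j l : ℝ) * G (p + 2*j) l t with hHdef
    set K : ℝ → ℝ := fun t => ∑ l ∈ Finset.range (j+1),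
      (c j l : ℝ) * (-(2*l+1 : ℝ) * Gψ (p + 2*j+1) l t) with hKdef
    have hH : ∀ t : ℝ, 0 < t → HasDerivAt H (K t) t := by
      intro t ht
      exact HasDerivAt.fun_sum fun l _ => (hasDerivAt_G (p+2*j) l ht).const_mul _
    have hK : ∀ t : ℝ, 0 < t → HasDerivAt K
        (∑ l ∈ Finset.range (j+1), (c j l : ℝ) * (-(2*l+1 : ℝ) *
          (-(2*l+1 : ℝ) * G (p+2*j+2) l t - (2*l+2 : ℝ) * G (p+2*j+2) (l+1) t))) t := by
      intro t ht
      apply HasDerivAt.fun_sum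
      intro l _
      exact ((hasDerivAt_Gψ (p+2*j+1) l ht).const_mul (-(2*l+1:ℝ))).const_mul _
    have e1 : iteratedDeriv (2*j) (G p 0) =ᶠ[nhds y] H :=
      Filter.eventuallyEq_of_mem (Ioi_mem_nhds hy) fun t ht => ih t ht
    have e3 : deriv H =ᶠ[nhds y] K :=
      Filter.eventuallyEq_of_mem (Ioi_mem_nhds hy) fun t ht => (hH t ht).deriv
    have e4 : deriv (iteratedDeriv (2*j) (G p 0)) =ᶠ[nhds y] K := e1.deriv.trans e3
    have h2 : 2*(j+1) = (2*j)+1+1 := by ring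
    rw [h2, iteratedDeriv_succ, iteratedDeriv_succ, e4.deriv_eq, (hK y hy).deriv]
    -- now pure algebra over finite sums
    rw [show p + (2*j+1+1) = p+2*j+2 from by ring]
    have step1 : (∑ l ∈ Finset.range (j+1), (c j l : ℝ) * (-(2*l+1 : ℝ) *
          (-(2*l+1 : ℝ) * G (p+2*j+2) l y - (2*l+2 : ℝ) * G (p+2*j+2) (l+1) y)))
        = (∑ l ∈ Finset.range (j+1), ((2*l+1:ℝ)^2 * (c j l : ℝ)) * G (p+2*j+2) l y)
          + ∑ l ∈ Finset.range (j+1), ((2*l+1:ℝ)*(2*l+2) * (c j l : ℝ)) * G (p+2*j+2) (l+1) y := by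
      rw [← Finset.sum_add_distrib]
      exact Finset.sum_congr rfl fun l _ => by ring
    rw [step1]
    have hA : (∑ l ∈ Finset.range (j+2), ((2*l+1:ℝ)^2 * (c j l : ℝ)) * G (p+2*j+2) l y)
        = ∑ l ∈ Finset.range (j+1), ((2*l+1:ℝ)^2 * (c j l : ℝ)) * G (p+2*j+2) l y := by
      rw [Finset.sum_range_succ, c_zero j (j+1) (by omega)]
      simp
    rw [← hA, Finset.sum_range_succ' (fun l => ((2*l+1:ℝ)^2 * (c j l : ℝ)) * G (p+2*j+2) l y) (j+1),
      Finset.sum_range_succ' (fun l => ((c (j+1) l : ℚ) : ℝ) * G (p+2*j+2) l y) (j+1)]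
    have hterm : ∀ l : ℕ, ((c (j+1) (l+1) : ℚ) : ℝ)
        = (2*((l:ℝ)+1)+1)^2 * ((c j (l+1) : ℚ) : ℝ) + (2*l+1)*(2*l+2) * ((c j l : ℚ) : ℝ) := by
      intro l
      rw [show c (j+1) (l+1) = (2*(l+1)+1)^2 * c j (l+1) + (2*l+1)*(2*l+2) * c j l from rfl]
      push_cast
      ring
    have hsplit : (∑ l ∈ Finset.range (j+1), ((c (j+1) (l+1) : ℚ) : ℝ) * G (p+2*j+2) (l+1) y)
        = (∑ l ∈ Finset.range (j+1), (2*((l:ℕ)+1:ℕ)+1:ℝ)^2 * ((c j (l+1) : ℚ) : ℝ) * G (p+2*j+2) (l+1) y)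
          + ∑ l ∈ Finset.range (j+1), (2*l+1:ℝ)*(2*l+2) * ((c j l : ℚ) : ℝ) * G (p+2*j+2) (l+1) y := by
      rw [← Finset.sum_add_distrib]
      refine Finset.sum_congr rfl fun l _ => ?_
      rw [hterm l]
      push_cast
      ring
    rw [hsplit]
    have e0 : ((2*((0:ℕ):ℝ)+1)^2 * ((c j 0 : ℚ) : ℝ)) * G (p+2*j+2) 0 y
        = ((c (j+1) 0 : ℚ) : ℝ) * G (p+2*j+2) 0 y := by
      rw [show c (j+1) 0 = c j 0 from rfl]
      norm_num
    rw [← e0]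
    push_cast
    ring

noncomputable def M (k : ℕ) : Matrix (Fin (k+1)) (Fin (k+1)) ℚ := fun j l => c j l

lemma M_triangular (k : ℕ) : (M k).BlockTriangular OrderDual.toDual := by
  intro i j h
  exact c_zero i j (by exact_mod_cast h)

lemma M_det_ne (k : ℕ) : (M k).det ≠ 0 := by
  rw [Matrix.det_of_lowerTriangular (M k) (M_triangular k)]
  apply Finset.prod_ne_zero_iff.mpr
  intro i _
  exact ne_of_gt (c_diag_pos i)

noncomputable def bco (k : ℕ) : ℕ → ℚ := fun j =>
  if h : j < k+1 then (M k)⁻¹ ⟨k, Nat.lt_succ_self k⟩ ⟨j, h⟩ else 0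

lemma bco_sum (k l : ℕ) (hl : l < k+1) :
    ∑ j ∈ Finset.range (k+1), bco k j * c j l = if l = k then 1 else 0 := by
  have hinv : (M k)⁻¹ * (M k) = 1 := Matrix.nonsing_inv_mul _ (Ne.isUnit (M_det_ne k))
  have happ := congrFun (congrFun hinv ⟨k, Nat.lt_succ_self k⟩) ⟨l, hl⟩
  rw [Matrix.mul_apply] at happ
  have hsum : ∑ j ∈ Finset.range (k+1), bco k j * c j l
      = ∑ j : Fin (k+1), (M k)⁻¹ ⟨k, Nat.lt_succ_self k⟩ j * M k j ⟨l, hl⟩ := by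
    rw [Finset.sum_range fun j => bco k j * c j l]
    refine Finset.sum_congr rfl fun j _ => ?_
    rw [bco, dif_pos j.isLt]
    rfl
  rw [hsum, happ, Matrix.one_apply]
  simp [Fin.ext_iff]
  split <;> simp_all [eq_comm]


lemma main_lhs (Q k : ℕ) (y : ℝ) :
    (∑' n : ℕ, (-1:ℝ)^n * ((n:ℝ)+1)^Q / Real.sinh (((n:ℝ)+1)*y) ^ (2*k+1)) = G Q k y := by
  rw [G]
  refine tsum_congr fun n => ?_
  simp only [φ]
  rw [div_eq_mul_inv, ← inv_pow]

end BarS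

open BarS in
theorem barS_higher_power_reduction (k : ℕ) :
    ∃ b : ℕ → ℚ, ∀ m : ℕ, 1 ≤ m → ∀ y : ℝ, 0 < y →
      ∑' n : ℕ, (-1 : ℝ) ^ n * ((n : ℝ) + 1) ^ (2 * (m + k) - 1) /
          Real.sinh (((n : ℝ) + 1) * y) ^ (2 * k + 1)
        = ∑ j ∈ Finset.range (k + 1), (b j : ℝ) *
            iteratedDeriv (2 * j)
              (fun t => ∑' n : ℕ, (-1 : ℝ) ^ n * ((n : ℝ) + 1) ^ (2 * (m + k - j) - 1) /
                Real.sinh (((n : ℝ) + 1) * t)) y := by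
  refine ⟨bco k, ?_⟩
  intro m hm y hy
  have hLHS := main_lhs (2*(m+k)-1) k y
  have hfun : ∀ j : ℕ, (fun t => ∑' n : ℕ, (-1:ℝ)^n * ((n:ℝ)+1)^(2*(m+k-j)-1) /
      Real.sinh (((n:ℝ)+1)*t)) = G (2*(m+k-j)-1) 0 := by
    intro j
    funext t
    rw [G]
    refine tsum_congr fun n => ?_
    simp [φ, div_eq_mul_inv]
  have h1 : ∀ j ∈ Finset.range (k+1),
      (bco k j : ℝ) * iteratedDeriv (2*j) (fun t => ∑' n : ℕ, (-1:ℝ)^n *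
          ((n:ℝ)+1)^(2*(m+k-j)-1) / Real.sinh (((n:ℝ)+1)*t)) y
        = ∑ l ∈ Finset.range (k+1), ((bco k j * c j l : ℚ) : ℝ) * G (2*(m+k)-1) l y := by
    intro j hj
    have hjk := Finset.mem_range.mp hj
    rw [hfun j, iter_eq (2*(m+k-j)-1) j y hy,
      show 2*(m+k-j)-1 + 2*j = 2*(m+k)-1 from by omega, Finset.mul_sum]
    have e1 : (∑ l ∈ Finset.range (j+1), (bco k j : ℝ) * ((c j l : ℚ) * G (2*(m+k)-1) l y))
        = ∑ l ∈ Finset.range (j+1), ((bco k j * c j l : ℚ) : ℝ) * G (2*(m+k)-1) l y := by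
      refine Finset.sum_congr rfl fun l _ => ?_
      push_cast
      ring
    rw [e1]
    apply Finset.sum_subset (Finset.range_subset_range.mpr (by omega : j+1 ≤ k+1))
    intro l hlk hlj
    rw [c_zero j l (by simp [Finset.mem_range] at hlk hlj ⊢; omega)]
    simp
  rw [hLHS, Finset.sum_congr rfl h1, Finset.sum_comm]
  have h2 : ∀ l ∈ Finset.range (k+1),
      (∑ j ∈ Finset.range (k+1), ((bco k j * c j l : ℚ) : ℝ) * G (2*(m+k)-1) l y)
        = (if l = k then (1:ℝ) else 0) * G (2*(m+k)-1) l y := by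
    intro l hl
    rw [← Finset.sum_mul]
    congr 1
    rw [← Rat.cast_sum, bco_sum k l (Finset.mem_range.mp hl)]
    split <;> simp
  rw [Finset.sum_congr rfl h2]
  simp only [ite_mul, one_mul, zero_mul]
  rw [Finset.sum_ite_eq' (Finset.range (k+1)) k (fun l => G (2*(m+k)-1) l y)]
  simp
end
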